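/- arXiv:1110.4499 — 9 statements merged into one kernel-verified Lean document; each statement's English description precedes it below -/
import Mathlib

section
/- If G is a tree and (G, S) is internally connected and shattered, then for every edge (u,v) on the unique path from s to t in G, d(v,t) < d(u,t); consequently greedy category-based routing correctly routes messages between every pair of vertices. -/
open Finset SimpleGraph

variable {V : Type*}

/-- The set of categories that `x` belongs to. -/
def cat [DecidableEq V] (S : Finset (Finset V)) (x : V) : Finset (Finset V) :=
  S.filter (fun C => x ∈ C)

/-- The category-based distance `d(s,t) = |cat(t) \ cat(s)|`. -/
def dd [DecidableEq V] (S : Finset (Finset V)) (s t : V) : ℕ :=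
  (cat S t \ cat S s).card

/-- `(G, S)` is shattered. -/
def Shattered [DecidableEq V] (G : SimpleGraph V) (S : Finset (Finset V)) : Prop :=
  ∀ s t : V, s ≠ t → ∃ u, G.Adj s u ∧ ∃ C ∈ S, u ∈ C ∧ t ∈ C ∧ s ∉ C

/-- `(G, S)` is internally connected: every category induces a connected subgraph. -/
def InternallyConnected (G : SimpleGraph V) (S : Finset (Finset V)) : Prop :=
  ∀ C ∈ S, (G.induce (C : Set V)).Preconnected

/-- Greedy routing can reach `t` from `s`: there is a path along which the
category distance to `t` strictly decreases at every step. -/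
def RoutesTo [DecidableEq V] (G : SimpleGraph V) (S : Finset (Finset V)) (s t : V) : Prop :=
  Relation.ReflTransGen (fun a b => G.Adj a b ∧ dd S b t < dd S a t) s t

/-- Greedy routing works between all pairs of vertices. -/
def RoutingWorks [DecidableEq V] (G : SimpleGraph V) (S : Finset (Finset V)) : Prop :=
  ∀ s t : V, s ≠ t → RoutesTo G S s t

/-- The membership dimension of a category system. -/
def memdim [DecidableEq V] [Fintype V] (S : Finset (Finset V)) : ℕ :=
  Finset.univ.sup fun u => (cat S u).card

/-!
In a forest, a vertex set inducing a connected subgraph contains the path between any two of its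
vertices. Let `u, v` be the first edge of the path from `u` to `t`. Every category containing `u`
and `t` then contains `v`, so `cat t \ cat v ⊆ cat t \ cat u`. Shattering supplies a neighbour `w`
of `u` and a category containing `w` and `t` but not `u`; the path from `w` to `t` inside that
category, preceded by the edge `u w`, is the path from `u` to `t`, so `w = v` and the inclusion is
strict. Greedy routing then just follows the path.
-/

namespace SimpleGraph

variable {G : SimpleGraph V}

theorem IsAcyclic.support_subset_of_preconnected_induce (hG : G.IsAcyclic) {s : Set V}
    (hs : (G.induce s).Preconnected) {u v : V} (hu : u ∈ s) (hv : v ∈ s) {p : G.Walk u v}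
    (hp : p.IsPath) : {x | x ∈ p.support} ⊆ s := by
  obtain ⟨q, hq⟩ := (hs ⟨u, hu⟩ ⟨v, hv⟩).exists_isPath
  -- `p` is the image of a path of the induced subgraph, by uniqueness of paths
  obtain rfl : q.map (Embedding.induce s).toHom = p :=
    congrArg Subtype.val <| (hG.subsingleton_path u v).elim
      ⟨_, hq.map Subtype.val_injective⟩ ⟨p, hp⟩
  intro x hx
  obtain ⟨y, -, rfl⟩ := List.mem_map.mp (Walk.support_map _ _ ▸ hx)
  exact y.2

theorem Walk.reflTransGen_of_forall_darts {r : V → V → Prop} {u v : V} (p : G.Walk u v)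
    (h : ∀ e ∈ p.darts, r e.fst e.snd) : Relation.ReflTransGen r u v := by
  induction p with
  | nil => exact .refl
  | cons hadj q ih =>
    simp only [Walk.darts_cons, List.forall_mem_cons] at h
    exact .head h.1 (ih h.2)

end SimpleGraph

open SimpleGraph

section Routing

variable {G : SimpleGraph V} {S : Finset (Finset V)}

theorem mem_of_isPath_cons_of_mem (hG : G.IsAcyclic) (hIC : InternallyConnected G S)
    {u v t : V} {h : G.Adj u v} {q : G.Walk v t} (hp : (q.cons h).IsPath)
    {C : Finset V} (hC : C ∈ S) (hu : u ∈ C) (ht : t ∈ C) : v ∈ C :=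
  hG.support_subset_of_preconnected_induce (hIC C hC) hu ht hp (by simp)

variable [DecidableEq V]

@[simp]
theorem mem_cat {C : Finset V} {x : V} : C ∈ cat S x ↔ C ∈ S ∧ x ∈ C :=
  Finset.mem_filter

theorem exists_mem_notMem_of_isPath_cons (hG : G.IsAcyclic) (hIC : InternallyConnected G S)
    (hSh : Shattered G S) {u v t : V} {h : G.Adj u v} {q : G.Walk v t}
    (hp : (q.cons h).IsPath) : ∃ C ∈ S, v ∈ C ∧ t ∈ C ∧ u ∉ C := by
  have hut : u ≠ t := by
    rintro rfl
    exact ((Walk.cons_isPath_iff h q).mp hp).2 q.end_mem_support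
  obtain ⟨w, huw, C, hC, hw, ht, hu⟩ := hSh u t hut
  obtain ⟨r, hr⟩ := ((hIC C hC ⟨w, hw⟩ ⟨t, ht⟩).map (Embedding.induce _).toHom).exists_isPath
  have hu_r : u ∉ r.support := fun hu' =>
    hu (hG.support_subset_of_preconnected_induce (hIC C hC) hw ht hr hu')
  have hr_cons : (r.cons huw).IsPath := (Walk.cons_isPath_iff huw r).mpr ⟨hr, hu_r⟩
  have hwv : w = v := by
    have := congrArg (fun p : G.Path u t => p.1.snd)
      ((hG.subsingleton_path u t).elim ⟨_, hr_cons⟩ ⟨_, hp⟩)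
    exact (Walk.snd_cons r huw).symm.trans (this.trans (Walk.snd_cons q h))
  exact ⟨C, hC, hwv ▸ hw, ht, hu⟩

theorem cat_sdiff_ssubset_of_isPath_cons (hG : G.IsAcyclic) (hIC : InternallyConnected G S)
    (hSh : Shattered G S) {u v t : V} {h : G.Adj u v} {q : G.Walk v t}
    (hp : (q.cons h).IsPath) : cat S t \ cat S v ⊂ cat S t \ cat S u := by
  have hsub : cat S t \ cat S v ⊆ cat S t \ cat S u := by
    intro C
    simp only [Finset.mem_sdiff, mem_cat]
    rintro ⟨⟨hC, ht⟩, hv⟩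
    exact ⟨⟨hC, ht⟩, fun ⟨_, hu⟩ => hv ⟨hC, mem_of_isPath_cons_of_mem hG hIC hp hC hu ht⟩⟩
  obtain ⟨C, hC, hv, ht, hu⟩ := exists_mem_notMem_of_isPath_cons hG hIC hSh hp
  exact (Finset.ssubset_iff_of_subset hsub).mpr ⟨C, by simp [hC, ht, hu], by simp [hC, hv]⟩

theorem dd_lt_of_isPath_cons (hG : G.IsAcyclic) (hIC : InternallyConnected G S)
    (hSh : Shattered G S) {u v t : V} {h : G.Adj u v} {q : G.Walk v t}
    (hp : (q.cons h).IsPath) : dd S v t < dd S u t :=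
  Finset.card_lt_card (cat_sdiff_ssubset_of_isPath_cons hG hIC hSh hp)

theorem SimpleGraph.Walk.IsPath.dd_lt_of_mem_darts (hG : G.IsAcyclic)
    (hIC : InternallyConnected G S) (hSh : Shattered G S) {s t : V} {p : G.Walk s t}
    (hp : p.IsPath) {e : G.Dart} (he : e ∈ p.darts) : dd S e.snd t < dd S e.fst t := by
  induction p with
  | nil => simp at he
  | cons h q ih =>
    rw [Walk.darts_cons, List.mem_cons] at he
    rcases he with rfl | he
    · exact dd_lt_of_isPath_cons hG hIC hSh hp
    · exact ih hp.of_cons he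

end Routing

/-- If `G` is a tree and `(G, S)` is internally connected and shattered,
then along every (unique) path the category distance to the target strictly decreases
across each edge; consequently greedy routing works between every pair of vertices. -/
theorem tree_routing_works [DecidableEq V] (G : SimpleGraph V) (S : Finset (Finset V))
    (hT : G.IsTree) (hIC : InternallyConnected G S) (hSh : Shattered G S) :
    (∀ (s t : V) (p : G.Walk s t), p.IsPath →
      ∀ e ∈ p.darts, dd S e.snd t < dd S e.fst t) ∧
    RoutingWorks G S := by
  have hdarts : ∀ (s t : V) (p : G.Walk s t), p.IsPath →
      ∀ e ∈ p.darts, dd S e.snd t < dd S e.fst t :=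
    fun _ _ _ hp _ he => hp.dd_lt_of_mem_darts hT.isAcyclic hIC hSh he
  refine ⟨hdarts, fun s t _ => ?_⟩
  obtain ⟨p, hp⟩ := hT.connected.preconnected.exists_isPath s t
  exact p.reflTransGen_of_forall_darts fun e he => ⟨e.adj, hdarts s t p hp e he⟩
end

section
/- If G is a tree, (G,S) is internally connected, and (u,v) is an edge on the unique simple path from u to a vertex t, then every category C ∈ S containing both u and t also contains v; hence |cat(t) ∩ cat(u)| ≤ |cat(t) ∩ cat(v)|. -/
/-! A category `C` containing `u` and `t` induces a connected subgraph, so some walk inside `C`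
joins `u` to `t`. Shortcutting that walk gives a path, which in a tree must be the given path
from `u` to `t`; hence its vertices, `v` among them, all lie in `C`. -/

open Finset SimpleGraph

variable {V : Type*}

namespace SimpleGraph

variable {G : SimpleGraph V} {u v : V}

lemma Reachable.exists_walk_support_subset_of_induce {s : Set V} {x y : s}
    (h : (G.induce s).Reachable x y) : ∃ q : G.Walk x y, ∀ w ∈ q.support, w ∈ s := by
  obtain ⟨q⟩ := h
  refine ⟨q.map (Embedding.induce s).toHom, fun w hw => ?_⟩
  obtain ⟨⟨w, hws⟩, -, rfl⟩ := List.mem_map.mp (Walk.support_map _ q ▸ hw)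
  exact hws

lemma IsAcyclic.support_subset_of_isPath (hG : G.IsAcyclic) {p : G.Walk u v} (hp : p.IsPath)
    (q : G.Walk u v) : p.support ⊆ q.support := by
  classical
  have hpq : p = q.bypass :=
    congrArg Subtype.val ((hG.subsingleton_path u v).elim ⟨p, hp⟩ ⟨q.bypass, q.bypass_isPath⟩)
  exact hpq ▸ q.support_bypass_subset_support

lemma IsAcyclic.support_subset_of_induce_preconnected (hG : G.IsAcyclic) {s : Set V}
    (hs : (G.induce s).Preconnected) (hu : u ∈ s) (hv : v ∈ s) {p : G.Walk u v}
    (hp : p.IsPath) : ∀ w ∈ p.support, w ∈ s := by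
  obtain ⟨q, hqs⟩ := (hs ⟨u, hu⟩ ⟨v, hv⟩).exists_walk_support_subset_of_induce
  exact fun w hw => hqs w (hG.support_subset_of_isPath hp q hw)

end SimpleGraph

lemma cat_inter_subset_cat_inter [DecidableEq V] {S : Finset (Finset V)} {t u v : V}
    (h : ∀ C ∈ S, u ∈ C → t ∈ C → v ∈ C) : cat S t ∩ cat S u ⊆ cat S t ∩ cat S v := by
  intro C hC
  simp only [cat, Finset.mem_inter, Finset.mem_filter] at hC ⊢
  exact ⟨hC.1, hC.2.1, h C hC.1.1 hC.2.2 hC.1.2⟩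

/-- In a tree with an internally connected category system, if `(u,v)` is
an edge on the unique simple path from `u` to `t`, then every category containing both
`u` and `t` also contains `v`; hence `|cat(t) ∩ cat(u)| ≤ |cat(t) ∩ cat(v)|`. -/
theorem tree_internally_connected_edge [DecidableEq V] (G : SimpleGraph V)
    (S : Finset (Finset V)) (hT : G.IsTree) (hIC : InternallyConnected G S)
    (u v t : V) (p : G.Walk u t) (hp : p.IsPath) (he : s(u, v) ∈ p.edges) :
    (∀ C ∈ S, u ∈ C → t ∈ C → v ∈ C) ∧
    (cat S t ∩ cat S u).card ≤ (cat S t ∩ cat S v).card := by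
  have hmem : ∀ C ∈ S, u ∈ C → t ∈ C → v ∈ C := fun C hC hu ht =>
    hT.isAcyclic.support_subset_of_induce_preconnected (hIC C hC) hu ht hp v
      (p.snd_mem_support_of_mem_edges he)
  exact ⟨hmem, Finset.card_le_card (cat_inter_subset_cat_inter hmem)⟩
end

section
/- If greedy category-based routing correctly routes messages between all pairs of vertices of a connected graph G with category system S, then the membership dimension of S is at least the diameter of G: memdim(S) ≥ diam(G). -/
open Finset SimpleGraph

variable {V : Type*}

lemma exists_walk_of_routesTo [DecidableEq V] (G : SimpleGraph V) (S : Finset (Finset V))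
    {s t : V} (h : RoutesTo G S s t) : ∃ w : G.Walk s t, w.length ≤ dd S s t := by
  induction h using Relation.ReflTransGen.head_induction_on with
  | refl => exact ⟨Walk.nil, Nat.zero_le _⟩
  | head hab _ ih =>
    obtain ⟨w, hw⟩ := ih
    exact ⟨Walk.cons hab.1 w, by simpa using Nat.succ_le_of_lt (lt_of_le_of_lt hw hab.2)⟩

/-- If greedy routing works on a connected graph `G` with category
system `S`, then the membership dimension is at least the diameter of `G`. -/
theorem memdim_ge_diam [DecidableEq V] [Fintype V] (G : SimpleGraph V)
    (S : Finset (Finset V)) (hconn : G.Connected) (h : RoutingWorks G S) :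
    G.diam ≤ memdim S := by
  have hed : G.ediam ≤ (memdim S : ℕ∞) := by
    apply ediam_le_of_edist_le
    intro u v
    rcases eq_or_ne u v with rfl | huv
    · simp
    · obtain ⟨w, hw⟩ := exists_walk_of_routesTo G S (h u v huv)
      calc G.edist u v ≤ w.length := edist_le w
        _ ≤ (dd S u v : ℕ∞) := by exact_mod_cast hw
        _ ≤ ((cat S v).card : ℕ∞) := by exact_mod_cast Finset.card_le_card (Finset.sdiff_subset)
        _ ≤ (memdim S : ℕ∞) := by
            exact_mod_cast Finset.le_sup (f := fun u => (cat S u).card) (Finset.mem_univ v)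
  calc G.diam = G.ediam.toNat := rfl
    _ ≤ (memdim S : ℕ∞).toNat := ENat.toNat_le_toNat hed (by simp)
    _ = memdim S := by simp
end

section
/- If G is a path graph on n vertices (vertices labeled 0,…,n−1, with i adjacent to i+1), then the category system S = {A_i : 0 ≤ i ≤ n−1} ∪ {B_i : 0 ≤ i ≤ n−1}, where A_i = {0,…,i−1} and B_i = {i+1,…,n−1}, makes (G,S) shattered and internally connected, and memdim(S) = n − 1 = diam(G). -/
open Finset SimpleGraph

variable {V : Type*}

/-!
A vertex `u` of the path lies in `A i` exactly for `i > u` and in `B i` exactly for `i < u`, so it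
lies in `n - 1` categories. The categories are intervals, hence connected, and `s` is separated
from `t` by the interval on the side of `t` that starts at the neighbour of `s`.
-/

theorem Set.OrdConnected.hasse_induce_preconnected {α : Type*} [LinearOrder α] [SuccOrder α]
    [IsSuccArchimedean α] {s : Set α} (hs : s.OrdConnected) :
    ((hasse α).induce s).Preconnected := by
  suffices h : ∀ a b : s, a ≤ b → ((hasse α).induce s).Reachable a b from
    fun a b => (le_total a b).elim (h a b) fun hba => (h b a hba).symm
  rintro ⟨a, ha⟩ ⟨b, hb⟩ (hab : a ≤ b)
  refine Succ.rec
    (P := fun c _ => ∀ hc : c ∈ s, ((hasse α).induce s).Reachable ⟨a, ha⟩ ⟨c, hc⟩)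
    (fun _ => .rfl) (fun c hac ih hsc => ?_) hab hb
  by_cases hc : IsMax c
  · simp only [hc.succ_eq] at hsc ⊢
    exact ih hsc
  have hcs : c ∈ s := hs.out ha hsc ⟨hac, Order.le_succ c⟩
  have hadj : ((hasse α).induce s).Adj ⟨c, hcs⟩ ⟨Order.succ c, hsc⟩ :=
    hasse_adj.2 (Or.inl (Order.covBy_succ_of_not_isMax hc))
  exact (ih hcs).trans hadj.reachable

theorem natDist_le_length_of_walk_pathGraph {n : ℕ} {u v : Fin n} (p : (pathGraph n).Walk u v) :
    Nat.dist u v ≤ p.length := by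
  induction p with
  | nil => simp
  | cons h _ ih =>
    rw [pathGraph_adj] at h
    rw [Walk.length_cons]
    unfold Nat.dist at *
    omega

theorem edist_pathGraph_le_of_le {n : ℕ} {u v : Fin n} (h : u ≤ v) :
    (pathGraph n).edist u v ≤ (v - u : ℕ) := by
  obtain ⟨k, hk⟩ : ∃ k, (v : ℕ) = u + k := ⟨v - u, by omega⟩
  induction k generalizing v with
  | zero => simp [Fin.ext hk]
  | succ k ih =>
    let w : Fin n := ⟨u + k, by omega⟩
    have hwv : (pathGraph n).edist w v = 1 :=
      edist_eq_one_iff_adj.2 (pathGraph_adj.2 (Or.inl (by simp [w, hk]; omega)))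
    calc (pathGraph n).edist u v ≤ (pathGraph n).edist u w + (pathGraph n).edist w v :=
          SimpleGraph.edist_triangle
      _ ≤ (k : ℕ) + 1 := by
          rw [hwv]
          gcongr
          simpa [w] using ih (v := w) (Fin.le_def.2 (Nat.le_add_right _ _)) rfl
      _ = (v - u : ℕ) := by rw [hk, Nat.add_sub_cancel_left]; push_cast; rfl

theorem edist_pathGraph {n : ℕ} (u v : Fin n) : (pathGraph n).edist u v = Nat.dist u v := by
  obtain ⟨p, hp⟩ := (pathGraph_preconnected n u v).exists_walk_length_eq_edist
  refine le_antisymm ?_ (hp ▸ Nat.cast_le.2 (natDist_le_length_of_walk_pathGraph p))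
  rcases le_total u v with h | h
  · rw [Nat.dist_eq_sub_of_le h]
    exact edist_pathGraph_le_of_le h
  · rw [SimpleGraph.edist_comm, Nat.dist_comm, Nat.dist_eq_sub_of_le h]
    exact edist_pathGraph_le_of_le h

theorem ediam_pathGraph_succ (n : ℕ) : (pathGraph (n + 1)).ediam = n := by
  refine le_antisymm (ediam_le_of_edist_le fun u v => ?_) ?_
  · rw [edist_pathGraph]
    exact_mod_cast (show Nat.dist u v ≤ n by unfold Nat.dist; omega)
  · calc (n : ℕ∞) = (pathGraph (n + 1)).edist 0 (Fin.last n) := by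
          simp [edist_pathGraph, Nat.dist]
      _ ≤ _ := edist_le_ediam

theorem diam_pathGraph (n : ℕ) : (pathGraph n).diam = n - 1 := by
  cases n with
  | zero => simp [SimpleGraph.diam, ediam_eq_zero_of_subsingleton]
  | succ n => simp [SimpleGraph.diam, ediam_pathGraph_succ]

section Categories

variable {α : Type*} [LinearOrder α] [Fintype α]

/-- On `Fin n`, `below i` and `above i` are the paper's `A i` and `B i`. -/
def below (i : α) : Finset α := {j | j < i}

def above (i : α) : Finset α := {j | i < j}

variable (α) in
def intervalCategories : Finset (Finset α) :=
  univ.image below ∪ univ.image above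

@[simp] theorem mem_below {i j : α} : j ∈ below i ↔ j < i := by simp [below]

@[simp] theorem mem_above {i j : α} : j ∈ above i ↔ i < j := by simp [above]

@[simp] theorem coe_below (i : α) : (below i : Set α) = Set.Iio i := by ext; simp

@[simp] theorem coe_above (i : α) : (above i : Set α) = Set.Ioi i := by ext; simp

theorem below_injective : Function.Injective (below : α → Finset α) := fun i j h =>
  Set.Iio_injective (by rw [← coe_below, h, coe_below])

theorem above_injective : Function.Injective (above : α → Finset α) := fun i j h =>
  Set.Ioi_injective (by rw [← coe_above, h, coe_above])

theorem below_mem_intervalCategories (i : α) : below i ∈ intervalCategories α :=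
  mem_union_left _ (mem_image_of_mem _ (mem_univ i))

theorem above_mem_intervalCategories (i : α) : above i ∈ intervalCategories α :=
  mem_union_right _ (mem_image_of_mem _ (mem_univ i))

theorem card_above_add_card_below (u : α) : #(above u) + #(below u) = Fintype.card α - 1 := by
  have hdisj : Disjoint (above u) (below u) :=
    disjoint_left.2 fun j h₁ h₂ => lt_asymm (mem_above.1 h₁) (mem_below.1 h₂)
  have hunion : above u ∪ below u = univ.erase u := by
    ext j
    simp [eq_comm]
  rw [← card_union_of_disjoint hdisj, hunion, card_erase_of_mem (mem_univ u), card_univ]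

theorem cat_intervalCategories (u : α) :
    cat (intervalCategories α) u = (above u).image below ∪ (below u).image above := by
  ext C
  simp only [cat, intervalCategories, mem_filter, mem_union, mem_image, mem_univ, true_and]
  constructor
  · rintro ⟨⟨i, rfl⟩ | ⟨i, rfl⟩, hu⟩
    exacts [Or.inl ⟨i, mem_above.2 (mem_below.1 hu), rfl⟩,
      Or.inr ⟨i, mem_below.2 (mem_above.1 hu), rfl⟩]
  · rintro (⟨i, hi, rfl⟩ | ⟨i, hi, rfl⟩)
    exacts [⟨Or.inl ⟨i, rfl⟩, mem_below.2 (mem_above.1 hi)⟩,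
      ⟨Or.inr ⟨i, rfl⟩, mem_above.2 (mem_below.1 hi)⟩]

theorem card_cat_intervalCategories (u : α) :
    #(cat (intervalCategories α) u) = Fintype.card α - 1 := by
  -- `below i` with `u < i` contains every `j < u`, which `above j` misses
  have hdisj : Disjoint ((above u).image below) ((below u).image above) := by
    simp only [Finset.disjoint_left, mem_image, not_exists, not_and]
    rintro _ ⟨i, hi, rfl⟩ j hj hji
    have hj_below : j ∈ below i := mem_below.2 ((mem_below.1 hj).trans (mem_above.1 hi))
    exact (lt_irrefl j) (mem_above.1 (hji ▸ hj_below))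
  rw [cat_intervalCategories, card_union_of_disjoint hdisj,
    card_image_of_injective _ below_injective, card_image_of_injective _ above_injective,
    card_above_add_card_below]

theorem memdim_intervalCategories : memdim (intervalCategories α) = Fintype.card α - 1 := by
  simp only [memdim, card_cat_intervalCategories]
  rcases isEmpty_or_nonempty α with _ | _
  · simp
  · exact sup_const univ_nonempty _

theorem shattered_hasse_intervalCategories [IsStronglyAtomic α] [IsStronglyCoatomic α] :
    Shattered (hasse α) (intervalCategories α) := by
  intro s t hst
  rcases hst.lt_or_gt with hst | hts
  · obtain ⟨u, hsu, -⟩ := exists_covBy_le_of_lt hst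
    exact ⟨u, hasse_adj.2 (Or.inl hsu), above s, above_mem_intervalCategories s,
      mem_above.2 hsu.lt, mem_above.2 hst, by simp⟩
  · obtain ⟨u, -, hus⟩ := exists_le_covBy_of_lt hts
    exact ⟨u, hasse_adj.2 (Or.inr hus), below s, below_mem_intervalCategories s,
      mem_below.2 hus.lt, mem_below.2 hts, by simp⟩

theorem internallyConnected_hasse_intervalCategories [SuccOrder α] [IsSuccArchimedean α] :
    InternallyConnected (hasse α) (intervalCategories α) := by
  intro C hC
  rcases mem_union.1 hC with hC | hC <;> obtain ⟨i, -, rfl⟩ := mem_image.1 hC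
  · rw [coe_below]
    exact Set.ordConnected_Iio.hasse_induce_preconnected
  · rw [coe_above]
    exact Set.ordConnected_Ioi.hasse_induce_preconnected

end Categories

theorem path_graph_categories_general (n : ℕ) :
    let A : Fin n → Finset (Fin n) := fun i => Finset.univ.filter (fun j => j < i)
    let B : Fin n → Finset (Fin n) := fun i => Finset.univ.filter (fun j => i < j)
    let S : Finset (Finset (Fin n)) := (Finset.univ.image A) ∪ (Finset.univ.image B)
    Shattered (pathGraph n) S ∧ InternallyConnected (pathGraph n) S ∧
      memdim S = n - 1 ∧ (pathGraph n).diam = n - 1 :=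
  ⟨shattered_hasse_intervalCategories, internallyConnected_hasse_intervalCategories,
    (memdim_intervalCategories (α := Fin n)).trans (by rw [Fintype.card_fin]), diam_pathGraph n⟩

/-- On the path graph with vertices `0, …, n-1`, the category system
consisting of the sets `A i = {0,…,i-1}` and `B i = {i+1,…,n-1}` is shattered and
internally connected, and its membership dimension equals `n - 1 = diam(G)`. -/
theorem path_graph_categories (n : ℕ) (hn : 2 ≤ n) :
    let A : Fin n → Finset (Fin n) := fun i => Finset.univ.filter (fun j => j < i)
    let B : Fin n → Finset (Fin n) := fun i => Finset.univ.filter (fun j => i < j)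
    let S : Finset (Finset (Fin n)) := (Finset.univ.image A) ∪ (Finset.univ.image B)
    Shattered (pathGraph n) S ∧ InternallyConnected (pathGraph n) S ∧
      memdim S = n - 1 ∧ (pathGraph n).diam = n - 1 :=
  path_graph_categories_general n
end

section
/- For every path graph G, there exists a category system S such that greedy category-based routing works between all pairs of vertices and memdim(S) = diam(G). -/
open Finset SimpleGraph

variable {V : Type*}

/-! ### Auxiliary constructions -/

/-- Suffix category. -/
def Ak (n k : ℕ) : Finset (Fin n) := Finset.univ.filter (fun j => k ≤ j.val)

/-- Prefix category. -/
def Bk (n k : ℕ) : Finset (Fin n) := Finset.univ.filter (fun j => j.val ≤ k)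

/-- The category system: all proper suffixes and proper prefixes. -/
def Sys (n : ℕ) : Finset (Finset (Fin n)) :=
  ((Finset.Ico 1 n).image (Ak n)) ∪ ((Finset.range (n-1)).image (Bk n))

lemma mem_Ak {n k : ℕ} {j : Fin n} : j ∈ Ak n k ↔ k ≤ j.val := by simp [Ak]
lemma mem_Bk {n k : ℕ} {j : Fin n} : j ∈ Bk n k ↔ j.val ≤ k := by simp [Bk]

lemma Ak_inj {n k k' : ℕ} (hk : k < n) (hk' : k' < n) (h : Ak n k = Ak n k') : k = k' := by
  have h1 : (⟨k, hk⟩ : Fin n) ∈ Ak n k := mem_Ak.mpr le_rfl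
  have h2 : (⟨k', hk'⟩ : Fin n) ∈ Ak n k' := mem_Ak.mpr le_rfl
  rw [h] at h1; rw [← h] at h2
  exact le_antisymm (mem_Ak.mp h2) (mem_Ak.mp h1)

lemma Bk_inj {n k k' : ℕ} (hk : k < n) (hk' : k' < n) (h : Bk n k = Bk n k') : k = k' := by
  have h1 : (⟨k, hk⟩ : Fin n) ∈ Bk n k := mem_Bk.mpr le_rfl
  have h2 : (⟨k', hk'⟩ : Fin n) ∈ Bk n k' := mem_Bk.mpr le_rfl
  rw [h] at h1; rw [← h] at h2
  exact le_antisymm (mem_Bk.mp h1) (mem_Bk.mp h2)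

lemma cat_sdiff {n : ℕ} (S : Finset (Finset (Fin n))) (s t : Fin n) :
    cat S t \ cat S s = S.filter (fun C => t ∈ C ∧ s ∉ C) := by
  ext C
  simp only [cat, Finset.mem_sdiff, Finset.mem_filter]
  tauto

/-- The category distance for `Sys n` is the natural distance on values. -/
lemma dd_Sys {n : ℕ} (s t : Fin n) : dd (Sys n) s t = Nat.dist s.val t.val := by
  unfold dd
  rw [cat_sdiff]
  rcases lt_trichotomy s.val t.val with hlt | heq | hgt
  · have : (Sys n).filter (fun C => t ∈ C ∧ s ∉ C)
        = (Finset.Ioc s.val t.val).image (Ak n) := by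
      ext C
      simp only [Finset.mem_filter, Sys, Finset.mem_union, Finset.mem_image,
        Finset.mem_Ico, Finset.mem_range, Finset.mem_Ioc]
      constructor
      · rintro ⟨⟨k, hk, rfl⟩ | ⟨k, hk, rfl⟩, ht, hs⟩
        · refine ⟨k, ⟨?_, mem_Ak.mp ht⟩, rfl⟩
          by_contra h
          exact hs (mem_Ak.mpr (Nat.le_of_not_lt h))
        · exact absurd (mem_Bk.mpr (le_trans (le_of_lt hlt) (mem_Bk.mp ht))) hs
      · rintro ⟨k, ⟨hks, hkt⟩, rfl⟩
        refine ⟨Or.inl ⟨k, ⟨Nat.one_le_iff_ne_zero.mpr (by omega),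
          lt_of_le_of_lt hkt t.isLt⟩, rfl⟩, mem_Ak.mpr hkt, fun h => ?_⟩
        exact absurd (mem_Ak.mp h) (by omega)
    rw [this, Finset.card_image_of_injOn, Nat.card_Ioc]
    · simp only [Nat.dist]; omega
    intro k hk k' hk' h
    simp only [Finset.coe_Ioc, Set.mem_Ioc] at hk hk'
    exact Ak_inj (lt_of_le_of_lt hk.2 t.isLt) (lt_of_le_of_lt hk'.2 t.isLt) h
  · have hst : s = t := Fin.ext heq
    subst hst
    rw [Finset.filter_false_of_mem (by tauto), Finset.card_empty, Nat.dist_self]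
  · have : (Sys n).filter (fun C => t ∈ C ∧ s ∉ C)
        = (Finset.Ico t.val s.val).image (Bk n) := by
      ext C
      simp only [Finset.mem_filter, Sys, Finset.mem_union, Finset.mem_image,
        Finset.mem_Ico, Finset.mem_range]
      constructor
      · rintro ⟨⟨k, hk, rfl⟩ | ⟨k, hk, rfl⟩, ht, hs⟩
        · exact absurd (mem_Ak.mpr (le_trans (mem_Ak.mp ht) (le_of_lt hgt))) hs
        · refine ⟨k, ⟨mem_Bk.mp ht, ?_⟩, rfl⟩
          by_contra h
          exact hs (mem_Bk.mpr (Nat.le_of_not_lt h))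
      · rintro ⟨k, ⟨hkt, hks⟩, rfl⟩
        have hs1 : s.val ≤ n - 1 := by omega
        refine ⟨Or.inr ⟨k, by omega, rfl⟩, mem_Bk.mpr hkt, fun h => ?_⟩
        exact absurd (mem_Bk.mp h) (by omega)
    rw [this, Finset.card_image_of_injOn, Nat.card_Ico]
    · simp only [Nat.dist]; omega
    intro k hk k' hk' h
    simp only [Finset.coe_Ico, Set.mem_Ico] at hk hk'
    exact Bk_inj (lt_trans hk.2 s.isLt) (lt_trans hk'.2 s.isLt) h

/-- Every category contains `0` or `last`, but not both. -/
lemma Sys_zero_xor_last {n : ℕ} (hn : 2 ≤ n) {C : Finset (Fin n)} (hC : C ∈ Sys n) :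
    (⟨0, by omega⟩ : Fin n) ∈ C ↔ (⟨n-1, by omega⟩ : Fin n) ∉ C := by
  simp only [Sys, Finset.mem_union, Finset.mem_image, Finset.mem_Ico, Finset.mem_range] at hC
  rcases hC with ⟨k, hk, rfl⟩ | ⟨k, hk, rfl⟩
  · simp only [mem_Ak]
    omega
  · simp only [mem_Bk]
    omega

lemma card_cat_Sys {n : ℕ} (hn : 2 ≤ n) (u : Fin n) : (cat (Sys n) u).card = n - 1 := by
  set z0 : Fin n := ⟨0, by omega⟩
  set z1 : Fin n := ⟨n-1, by omega⟩
  have hsplit : cat (Sys n) u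
      = (cat (Sys n) u \ cat (Sys n) z0) ∪ (cat (Sys n) u \ cat (Sys n) z1) := by
    ext C
    simp only [Finset.mem_union, Finset.mem_sdiff, cat, Finset.mem_filter]
    constructor
    · rintro ⟨hC, hu⟩
      by_cases h0 : z0 ∈ C
      · exact Or.inr ⟨⟨hC, hu⟩, fun h => ((Sys_zero_xor_last hn hC).mp h0) h.2⟩
      · exact Or.inl ⟨⟨hC, hu⟩, fun h => h0 h.2⟩
    · rintro (⟨h, _⟩ | ⟨h, _⟩) <;> exact h
  have hdisj : Disjoint (cat (Sys n) u \ cat (Sys n) z0) (cat (Sys n) u \ cat (Sys n) z1) := by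
    rw [Finset.disjoint_left]
    intro C hC hC'
    simp only [Finset.mem_sdiff, cat, Finset.mem_filter] at hC hC'
    have h0 : z0 ∉ C := fun h => hC.2 ⟨hC.1.1, h⟩
    have h1 : z1 ∉ C := fun h => hC'.2 ⟨hC.1.1, h⟩
    exact h1 (not_not.mp (fun h => h0 ((Sys_zero_xor_last hn hC.1.1).mpr h)))
  rw [hsplit, Finset.card_union_of_disjoint hdisj]
  have e0 : (cat (Sys n) u \ cat (Sys n) z0).card = dd (Sys n) z0 u := rfl
  have e1 : (cat (Sys n) u \ cat (Sys n) z1).card = dd (Sys n) z1 u := rfl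
  rw [e0, e1, dd_Sys, dd_Sys]
  have := u.isLt
  simp only [z0, z1, Nat.dist]
  omega

/-- The path graph's extended distance is the natural distance. -/
lemma pathGraph_edist {n : ℕ} (hn : 1 ≤ n) (u v : Fin n) :
    (pathGraph n).edist u v = (Nat.dist u.val v.val : ℕ∞) := by
  have upper : ∀ k : ℕ, ∀ u v : Fin n, u.val + k = v.val →
      (pathGraph n).edist u v ≤ (k : ℕ∞) := by
    intro k
    induction k with
    | zero =>
      intro u v h
      have : u = v := Fin.ext (by omega)
      subst this
      simp [edist_self]
    | succ m ih =>
      intro u v h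
      have hu1 : u.val + 1 < n := by have := v.isLt; omega
      set u' : Fin n := ⟨u.val + 1, hu1⟩
      have hadj : (pathGraph n).Adj u u' := pathGraph_adj.mpr (Or.inl rfl)
      calc (pathGraph n).edist u v ≤ (pathGraph n).edist u u' + (pathGraph n).edist u' v :=
            SimpleGraph.edist_triangle
        _ ≤ 1 + (m : ℕ∞) := by
            refine add_le_add (le_of_eq (edist_eq_one_iff_adj.mpr hadj)) (ih u' v (by simp [u']; omega))
        _ = ((m + 1 : ℕ) : ℕ∞) := by push_cast; ring
  have hub : (pathGraph n).edist u v ≤ (Nat.dist u.val v.val : ℕ∞) := by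
    rcases le_total u.val v.val with h | h
    · rw [Nat.dist_eq_sub_of_le h]
      exact upper _ u v (by omega)
    · rw [Nat.dist_comm, Nat.dist_eq_sub_of_le h, edist_comm]
      exact upper _ v u (by omega)
  have lower : ∀ {a b : Fin n} (w : (pathGraph n).Walk a b), Nat.dist a.val b.val ≤ w.length := by
    intro a b w
    induction w with
    | nil => simp [Nat.dist_self]
    | @cons x y z hxy p ih =>
      have h1 : Nat.dist x.val y.val = 1 := by
        rcases pathGraph_adj.mp hxy with h | h <;> simp [Nat.dist] <;> omega
      calc Nat.dist x.val z.val ≤ Nat.dist x.val y.val + Nat.dist y.val z.val :=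
            Nat.dist.triangle_inequality _ _ _
        _ ≤ 1 + p.length := by rw [h1]; omega
        _ = (Walk.cons hxy p).length := by simp [Walk.length_cons]; omega
  have hreach : (pathGraph n).Reachable u v := pathGraph_preconnected n u v
  obtain ⟨p, hp⟩ := hreach.exists_walk_length_eq_edist
  have hlb : (Nat.dist u.val v.val : ℕ∞) ≤ (pathGraph n).edist u v := by
    rw [← hp]
    exact_mod_cast Nat.cast_le.mpr (lower p)
  exact le_antisymm hub hlb

lemma pathGraph_diam {n : ℕ} (hn : 2 ≤ n) : (pathGraph n).diam = n - 1 := by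
  have hediam : (pathGraph n).ediam = ((n - 1 : ℕ) : ℕ∞) := by
    apply le_antisymm
    · apply ediam_le_of_edist_le
      intro u v
      rw [pathGraph_edist (by omega)]
      have := u.isLt; have := v.isLt
      have hd : Nat.dist u.val v.val ≤ n - 1 := by
        have := u.isLt; have := v.isLt; simp only [Nat.dist]; omega
      exact_mod_cast Nat.cast_le.mpr hd
    · calc ((n - 1 : ℕ) : ℕ∞)
          = (pathGraph n).edist ⟨0, by omega⟩ ⟨n-1, by omega⟩ := by
            rw [pathGraph_edist (by omega)]
            congr 1
            simp [Nat.dist]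
        _ ≤ (pathGraph n).ediam := edist_le_ediam
  rw [SimpleGraph.diam, hediam, ENat.toNat_coe]

/-- For every path graph there is a category system for which greedy
routing works between all pairs of vertices and whose membership dimension equals
the diameter. -/
theorem path_graph_routing (n : ℕ) (hn : 2 ≤ n) :
    ∃ S : Finset (Finset (Fin n)),
      RoutingWorks (pathGraph n) S ∧ memdim S = (pathGraph n).diam := by
  refine ⟨Sys n, ?_, ?_⟩
  · -- routing works
    intro s t hst
    have key : ∀ k : ℕ, ∀ s : Fin n, Nat.dist s.val t.val ≤ k → RoutesTo (pathGraph n) (Sys n) s t := by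
      intro k
      induction k with
      | zero =>
        intro s h
        have : s = t := Fin.ext (Nat.eq_of_dist_eq_zero (by omega))
        subst this
        exact Relation.ReflTransGen.refl
      | succ m ih =>
        intro s h
        rcases eq_or_ne s t with rfl | hne
        · exact Relation.ReflTransGen.refl
        · have hd : Nat.dist s.val t.val ≠ 0 := fun h0 => hne (Fin.ext (Nat.eq_of_dist_eq_zero h0))
          rcases lt_or_gt_of_ne (fun h => hne (Fin.ext h) : s.val ≠ t.val) with hlt | hgt
          · set s' : Fin n := ⟨s.val + 1, by have := t.isLt; omega⟩
            have hadj : (pathGraph n).Adj s s' := pathGraph_adj.mpr (Or.inl rfl)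
            have hdd : dd (Sys n) s' t < dd (Sys n) s t := by
              rw [dd_Sys, dd_Sys]
              simp only [s', Nat.dist]
              omega
            refine Relation.ReflTransGen.head ⟨hadj, hdd⟩ (ih s' ?_)
            simp only [s', Nat.dist] at h ⊢
            omega
          · set s' : Fin n := ⟨s.val - 1, by have := s.isLt; omega⟩
            have hadj : (pathGraph n).Adj s s' := pathGraph_adj.mpr (Or.inr (by simp [s']; omega))
            have hdd : dd (Sys n) s' t < dd (Sys n) s t := by
              rw [dd_Sys, dd_Sys]
              simp only [s', Nat.dist]
              omega
            refine Relation.ReflTransGen.head ⟨hadj, hdd⟩ (ih s' ?_)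
            simp only [s', Nat.dist] at h ⊢
            omega
    exact key (Nat.dist s.val t.val) s le_rfl
  · -- memdim = diam
    rw [pathGraph_diam hn]
    unfold memdim
    have : ∀ u : Fin n, (cat (Sys n) u).card = n - 1 := card_cat_Sys hn
    rw [show (fun u => (cat (Sys n) u).card) = (fun _ : Fin n => n - 1) from funext this]
    haveI : Nonempty (Fin n) := ⟨⟨0, by omega⟩⟩
    simp [Finset.sup_const Finset.univ_nonempty]
end

section
/- For every finite binary tree G (every vertex has at most 2 children after rooting at a vertex of degree ≤ 2), there exists a category system S such that (G,S) is shattered and internally connected and memdim(S) = O(diam(G)^2). Concretely, memdim(S) ≤ c · (diam(G)+1)^2 for an absolute constant c. -/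
/-!
Root the tree at `r`. The categories are the subtrees `T(v)` and, for each vertex `a`, child `c`
of `a` and `j ≤ diam G`, the subtree `T(a)` with the vertices of `T(c)` deeper than
`depth a + j` removed. If `t` lies below `s`, the subtree of the child of `s` towards `t`
separates them. Otherwise let `a` be the deepest common ancestor of `s` and `t`, and `c` the child
of `a` above `s`; pruning `T(c)` just above `s` gives a category containing the parent of `s`
and `t` but not `s`. A vertex lies in at most `depth + 1` subtrees, and, as each of its
`depth + 1` ancestors has at most two children, in at most `2 (depth + 1) (diam + 1)` pruned
subtrees.
-/

open Finset SimpleGraph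

variable {V : Type*}

noncomputable section

namespace SimpleGraph

variable {G : SimpleGraph V}

lemma Connected.exists_adj_dist_add_one_eq (hG : G.Connected) {u v : V} (hne : u ≠ v) :
    ∃ w, G.Adj u w ∧ G.dist w v + 1 = G.dist u v := by
  obtain ⟨p, hp⟩ := hG.exists_walk_length_eq_dist u v
  cases p with
  | nil => exact absurd rfl hne
  | @cons _ w _ huw q =>
    refine ⟨w, huw, le_antisymm ?_ ?_⟩
    · rw [← hp, Walk.length_cons]
      exact Nat.add_le_add_right (dist_le q) 1
    · have := hG.dist_triangle (u := u) (v := w) (w := v)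
      rw [dist_eq_one_iff_adj.mpr huw] at this
      omega

lemma induce_preconnected_of_exists_adj_lt {s : Set V} {v : V} (hv : v ∈ s) (f : V → ℕ)
    (H : ∀ x ∈ s, x ≠ v → ∃ w ∈ s, G.Adj x w ∧ f w < f x) : (G.induce s).Preconnected := by
  have key : ∀ n x (hx : x ∈ s), f x = n → (G.induce s).Reachable ⟨x, hx⟩ ⟨v, hv⟩ := by
    intro n
    induction n using Nat.strong_induction_on with
    | _ n ih =>
      rintro x hx rfl
      rcases eq_or_ne x v with rfl | hxv
      · rfl
      obtain ⟨w, hw, hxw, hlt⟩ := H x hx hxv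
      exact (show (G.induce s).Adj ⟨x, hx⟩ ⟨w, hw⟩ from hxw).reachable.trans (ih _ hlt w hw rfl)
  rintro ⟨x, hx⟩ ⟨y, hy⟩
  exact (key _ x hx rfl).trans (key _ y hy rfl).symm

lemma IsTree.mem_support_of_dist_add_dist_eq (hG : G.IsTree) {x y z : V}
    (h : G.dist x y + G.dist y z = G.dist x z) {p : G.Walk x z} (hp : p.IsPath) :
    y ∈ p.support := by
  obtain ⟨q₁, hq₁⟩ := hG.connected.exists_walk_length_eq_dist x y
  obtain ⟨q₂, hq₂⟩ := hG.connected.exists_walk_length_eq_dist y z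
  have hq : (q₁.append q₂).IsPath :=
    Walk.isPath_of_length_eq_dist _ (by rw [Walk.length_append, hq₁, hq₂, h])
  rw [← (hG.existsUnique_path x z).unique hq hp]
  exact (Walk.mem_support_append_iff q₁ q₂).mpr (Or.inl q₁.end_mem_support)

/-- In a tree rooted at `r`: `v` is `x` or an ancestor of `x`. -/
def IsAncestor (G : SimpleGraph V) (r v x : V) : Prop :=
  G.dist r v + G.dist v x = G.dist r x

instance (r v x : V) : Decidable (G.IsAncestor r v x) :=
  inferInstanceAs (Decidable (_ = _))

lemma isAncestor_self (r v : V) : G.IsAncestor r v v := by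
  simp [IsAncestor]

lemma isAncestor_root (r x : V) : G.IsAncestor r r x := by
  simp [IsAncestor]

lemma IsAncestor.dist_le {r v x : V} (h : G.IsAncestor r v x) : G.dist r v ≤ G.dist r x := by
  unfold IsAncestor at h
  omega

lemma exists_deepest_common_ancestor [Fintype V] (r s t : V) :
    ∃ a, G.IsAncestor r a s ∧ G.IsAncestor r a t ∧
      ∀ c, G.IsAncestor r c s → G.IsAncestor r c t → G.dist r c ≤ G.dist r a := by
  obtain ⟨a, ha, hmax⟩ := ({a | G.IsAncestor r a s ∧ G.IsAncestor r a t} : Finset V)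
    |>.exists_max_image (G.dist r) ⟨r, by simp [isAncestor_root]⟩
  simp only [mem_filter, mem_univ, true_and] at ha hmax
  exact ⟨a, ha.1, ha.2, fun c hs ht => hmax c ⟨hs, ht⟩⟩

lemma Connected.isAncestor_of_adj (hG : G.Connected) {r c w x : V} (h : G.IsAncestor r c w)
    (hwx : G.Adj w x) (hx : G.dist r x = G.dist r w + 1) : G.IsAncestor r c x := by
  have h₁ := hG.dist_triangle (u := c) (v := w) (w := x)
  have h₂ := hG.dist_triangle (u := r) (v := c) (w := x)
  rw [dist_eq_one_iff_adj.mpr hwx] at h₁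
  unfold IsAncestor at *
  omega

lemma IsTree.exists_child_isAncestor (hG : G.IsTree) {r a x : V} (h : G.IsAncestor r a x)
    (hne : a ≠ x) : ∃ c, G.Adj a c ∧ G.dist r c = G.dist r a + 1 ∧ G.IsAncestor r c x := by
  obtain ⟨c, hac, hcx⟩ := hG.connected.exists_adj_dist_add_one_eq hne
  have := hG.connected.dist_triangle (u := r) (v := c) (w := x)
  unfold IsAncestor at *
  rcases hG.dist_eq_dist_add_one_of_adj r hac with h' | h' <;>
    exact ⟨c, hac, by omega, by omega⟩

lemma IsTree.exists_parent (hG : G.IsTree) {r v x : V} (h : G.IsAncestor r v x) (hne : x ≠ v) :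
    ∃ w, G.Adj x w ∧ G.dist r w + 1 = G.dist r x ∧ G.IsAncestor r v w := by
  obtain ⟨w, hxw, hwv⟩ := hG.connected.exists_adj_dist_add_one_eq hne
  have := hG.connected.dist_triangle (u := r) (v := v) (w := w)
  rw [dist_comm (u := w), dist_comm (u := x)] at hwv
  unfold IsAncestor at *
  rcases hG.dist_eq_dist_add_one_of_adj r hxw with h' | h' <;>
    exact ⟨w, hxw, by omega, by omega⟩

lemma IsTree.card_ancestors_le [Fintype V] (hG : G.IsTree) (r x : V) :
    #{v | G.IsAncestor r v x} ≤ G.dist r x + 1 := by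
  classical
  obtain ⟨p, hp, hpl⟩ := hG.connected.exists_path_of_dist r x
  calc #{v | G.IsAncestor r v x} ≤ #p.support.toFinset :=
        card_le_card fun v hv => List.mem_toFinset.mpr
          (hG.mem_support_of_dist_add_dist_eq (mem_filter.mp hv).2 hp)
    _ ≤ p.support.length := p.support.toFinset_card_le
    _ = G.dist r x + 1 := by rw [Walk.length_support, hpl]

def children [Fintype V] (G : SimpleGraph V) [DecidableRel G.Adj] (r a : V) : Finset V :=
  {c ∈ G.neighborFinset a | G.dist r c = G.dist r a + 1}

lemma mem_children [Fintype V] [DecidableRel G.Adj] {r a c : V} :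
    c ∈ G.children r a ↔ G.Adj a c ∧ G.dist r c = G.dist r a + 1 := by
  simp [children]

lemma IsTree.card_children_lt_degree [Fintype V] [DecidableRel G.Adj] (hG : G.IsTree)
    {r a : V} (ha : a ≠ r) : #(G.children r a) < G.degree a := by
  obtain ⟨w, haw, hw, -⟩ := hG.exists_parent (isAncestor_root r a) ha
  rw [← card_neighborFinset_eq_degree]
  refine card_lt_card ((ssubset_iff_of_subset (filter_subset _ _)).mpr
    ⟨w, (mem_neighborFinset ..).mpr haw, fun hw' => ?_⟩)
  have := (mem_children.mp hw').2
  omega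

lemma IsTree.card_children_le_two [Fintype V] [DecidableRel G.Adj] (hG : G.IsTree) {r : V}
    (hr : G.degree r ≤ 2) (hdeg : ∀ v, v ≠ r → G.degree v ≤ 3) (a : V) :
    #(G.children r a) ≤ 2 := by
  rcases eq_or_ne a r with rfl | ha
  · exact (card_filter_le _ _).trans (by rwa [card_neighborFinset_eq_degree])
  · have := hG.card_children_lt_degree ha
    have := hdeg a ha
    omega

def subtree [Fintype V] (G : SimpleGraph V) (r v : V) : Finset V :=
  {x | G.IsAncestor r v x}

def prunedSubtree [Fintype V] [DecidableEq V] (G : SimpleGraph V) (r a c : V) (j : ℕ) :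
    Finset V :=
  G.subtree r a \ {x ∈ G.subtree r c | G.dist r a + j < G.dist r x}

lemma mem_subtree [Fintype V] {r v x : V} : x ∈ G.subtree r v ↔ G.IsAncestor r v x := by
  simp [subtree]

lemma mem_prunedSubtree [Fintype V] [DecidableEq V] {r a c x : V} {j : ℕ} :
    x ∈ G.prunedSubtree r a c j ↔
      G.IsAncestor r a x ∧ (G.IsAncestor r c x → G.dist r x ≤ G.dist r a + j) := by
  simp [prunedSubtree, mem_subtree]

def treeCategories [Fintype V] [DecidableEq V] (G : SimpleGraph V) [DecidableRel G.Adj] (r : V)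
    (D : ℕ) : Finset (Finset V) :=
  univ.image (G.subtree r) ∪
    ((univ.sigma (G.children r)) ×ˢ range (D + 1)).image
      fun p => G.prunedSubtree r p.1.1 p.1.2 p.2

lemma IsTree.induce_subtree_preconnected [Fintype V] (hG : G.IsTree) (r v : V) :
    (G.induce (G.subtree r v : Set V)).Preconnected := by
  refine induce_preconnected_of_exists_adj_lt (mem_subtree.mpr (isAncestor_self r v)) (G.dist r)
    fun x hx hxv => ?_
  obtain ⟨w, hxw, hw, hvw⟩ := hG.exists_parent (mem_subtree.mp hx) hxv
  exact ⟨w, mem_subtree.mpr hvw, hxw, by omega⟩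

lemma IsTree.induce_prunedSubtree_preconnected [Fintype V] [DecidableEq V] (hG : G.IsTree)
    (r a c : V) (j : ℕ) :
    (G.induce (G.prunedSubtree r a c j : Set V)).Preconnected := by
  refine induce_preconnected_of_exists_adj_lt
    (mem_prunedSubtree.mpr ⟨isAncestor_self r a, fun _ => Nat.le_add_right _ _⟩) (G.dist r)
    fun x hx hxa => ?_
  obtain ⟨hax, hdeep⟩ := mem_prunedSubtree.mp hx
  obtain ⟨w, hxw, hw, haw⟩ := hG.exists_parent hax hxa
  refine ⟨w, mem_prunedSubtree.mpr ⟨haw, fun hcw => ?_⟩, hxw, by omega⟩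
  have := hdeep (hG.connected.isAncestor_of_adj hcw hxw.symm (by omega))
  omega

lemma IsTree.internallyConnected_treeCategories [Fintype V] [DecidableEq V] [DecidableRel G.Adj]
    (hG : G.IsTree) (r : V) (D : ℕ) :
    InternallyConnected G (G.treeCategories r D) := by
  intro C hC
  rcases mem_union.mp hC with hC | hC
  · obtain ⟨v, -, rfl⟩ := mem_image.mp hC
    exact hG.induce_subtree_preconnected r v
  · obtain ⟨⟨⟨a, c⟩, j⟩, -, rfl⟩ := mem_image.mp hC
    exact hG.induce_prunedSubtree_preconnected r a c j

lemma IsTree.exists_adj_subtree_separating [Fintype V] (hG : G.IsTree) {r s t : V}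
    (h : G.IsAncestor r s t) (hst : s ≠ t) :
    ∃ c, G.Adj s c ∧ t ∈ G.subtree r c ∧ s ∉ G.subtree r c := by
  obtain ⟨c, hsc, hc, hct⟩ := hG.exists_child_isAncestor h hst
  exact ⟨c, hsc, mem_subtree.mpr hct, fun hs => by have := (mem_subtree.mp hs).dist_le; omega⟩

lemma IsTree.exists_adj_prunedSubtree_separating [Fintype V] [DecidableEq V] [DecidableRel G.Adj]
    (hG : G.IsTree) {r s t : V} (h : ¬G.IsAncestor r s t) :
    ∃ u, G.Adj s u ∧ ∃ a, ∃ c ∈ G.children r a, ∃ j < G.dist r s,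
      u ∈ G.prunedSubtree r a c j ∧ t ∈ G.prunedSubtree r a c j ∧
        s ∉ G.prunedSubtree r a c j := by
  obtain ⟨a, has, hat, hdeepest⟩ := exists_deepest_common_ancestor (G := G) r s t
  have has' : a ≠ s := by
    rintro rfl
    exact h hat
  obtain ⟨c, hac, hc, hcs⟩ := hG.exists_child_isAncestor has has'
  obtain ⟨u, hsu, hu, hau⟩ := hG.exists_parent has has'.symm
  have := hcs.dist_le
  refine ⟨u, hsu, a, c, mem_children.mpr ⟨hac, hc⟩, G.dist r s - G.dist r a - 1, by omega,
    mem_prunedSubtree.mpr ⟨hau, fun _ => by omega⟩,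
    mem_prunedSubtree.mpr ⟨hat, fun hct => by have := hdeepest c hcs hct; omega⟩, ?_⟩
  rw [mem_prunedSubtree]
  exact fun ⟨_, hdeep⟩ => by have := hdeep hcs; omega

lemma IsTree.shattered_treeCategories [Fintype V] [DecidableEq V] [DecidableRel G.Adj]
    (hG : G.IsTree) {r : V} {D : ℕ} (hD : ∀ x, G.dist r x ≤ D) :
    Shattered G (G.treeCategories r D) := by
  intro s t hst
  by_cases h : G.IsAncestor r s t
  · obtain ⟨c, hsc, ht, hs⟩ := hG.exists_adj_subtree_separating h hst
    exact ⟨c, hsc, G.subtree r c, mem_union_left _ (mem_image_of_mem _ (mem_univ c)),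
      mem_subtree.mpr (isAncestor_self r c), ht, hs⟩
  · obtain ⟨u, hsu, a, c, hc, j, hj, hu, ht, hs⟩ := hG.exists_adj_prunedSubtree_separating h
    refine ⟨u, hsu, G.prunedSubtree r a c j,
      mem_union_right _ (mem_image.mpr ⟨(⟨a, c⟩, j), ?_, rfl⟩), hu, ht, hs⟩
    have := hD s
    exact mem_product.mpr ⟨mem_sigma.mpr ⟨mem_univ a, hc⟩, mem_range.mpr (by omega)⟩

lemma card_cat_image_le [DecidableEq V] {ι : Type*} (I : Finset ι) (f : ι → Finset V) (x : V) :
    #(cat (I.image f) x) ≤ #{i ∈ I | x ∈ f i} := by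
  rw [cat, filter_image]
  exact card_image_le

lemma IsTree.card_cat_treeCategories_le [Fintype V] [DecidableEq V] [DecidableRel G.Adj]
    (hG : G.IsTree) {r : V} (hchildren : ∀ a, #(G.children r a) ≤ 2) (D : ℕ) (x : V) :
    #(cat (G.treeCategories r D) x) ≤ (G.dist r x + 1) * (2 * D + 3) := by
  have hA : #(cat (univ.image (G.subtree r)) x) ≤ G.dist r x + 1 :=
    (card_cat_image_le _ _ x).trans (by simpa only [mem_subtree] using hG.card_ancestors_le r x)
  have hB : #(cat (((univ.sigma (G.children r)) ×ˢ range (D + 1)).image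
      fun p => G.prunedSubtree r p.1.1 p.1.2 p.2) x) ≤ (G.dist r x + 1) * (2 * (D + 1)) := by
    refine (card_cat_image_le _ _ x).trans ?_
    calc _ ≤ #(({v | G.IsAncestor r v x} : Finset V).sigma (G.children r) ×ˢ range (D + 1)) := by
          refine card_le_card fun p hp => ?_
          obtain ⟨hp, hx⟩ := mem_filter.mp hp
          simp only [mem_product, mem_sigma, mem_filter, mem_univ, true_and] at hp ⊢
          exact ⟨⟨(mem_prunedSubtree.mp hx).1, hp.1⟩, hp.2⟩
      _ ≤ (G.dist r x + 1) * 2 * (D + 1) := by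
          rw [card_product, card_sigma, card_range]
          gcongr
          exact (sum_le_card_nsmul _ _ 2 fun a _ => hchildren a).trans
            (Nat.mul_le_mul_right 2 (hG.card_ancestors_le r x))
      _ = _ := by ring
  rw [treeCategories, cat, filter_union]
  calc _ ≤ _ := card_union_le _ _
    _ ≤ (G.dist r x + 1) + (G.dist r x + 1) * (2 * (D + 1)) := add_le_add hA hB
    _ = _ := by ring

lemma IsTree.memdim_treeCategories_le [Fintype V] [DecidableEq V] [DecidableRel G.Adj]
    (hG : G.IsTree) {r : V} (hchildren : ∀ a, #(G.children r a) ≤ 2) {D : ℕ}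
    (hD : ∀ x, G.dist r x ≤ D) :
    memdim (G.treeCategories r D) ≤ 3 * (D + 1) ^ 2 :=
  Finset.sup_le fun x _ => (hG.card_cat_treeCategories_le hchildren D x).trans <|
    (Nat.mul_le_mul (Nat.add_le_add_right (hD x) 1) (by omega : 2 * D + 3 ≤ 3 * (D + 1))).trans_eq
      (by ring)

end SimpleGraph

end

/-- For every finite binary tree (a tree having a vertex `r` of degree at
most 2 such that all other vertices have degree at most 3, i.e. at most two children
after rooting at `r`), there is a shattered and internally connected category system
with membership dimension `O(diam(G)^2)`: at most `c * (diam(G)+1)^2` for an absolute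
constant `c`. -/
theorem binary_tree_categories :
    ∃ c : ℕ, ∀ (V : Type) (_ : Fintype V) (_ : DecidableEq V) (G : SimpleGraph V)
      (_ : DecidableRel G.Adj),
      G.IsTree →
      (∃ r : V, G.degree r ≤ 2 ∧ ∀ v : V, v ≠ r → G.degree v ≤ 3) →
      ∃ S : Finset (Finset V),
        Shattered G S ∧ InternallyConnected G S ∧
          memdim S ≤ c * (G.diam + 1) ^ 2 := by
  refine ⟨3, fun V _ _ G _ hG ⟨r, hr, hdeg⟩ => ?_⟩
  have : Nonempty V := hG.connected.nonempty
  have hD : ∀ x, G.dist r x ≤ G.diam := fun x =>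
    dist_le_diam (connected_iff_ediam_ne_top.mp hG.connected)
  exact ⟨G.treeCategories r G.diam, hG.shattered_treeCategories hD,
    hG.internallyConnected_treeCategories r G.diam,
    hG.memdim_treeCategories_le (hG.card_children_le_two hr hdeg) hD⟩
end

section
/- Let T be a rooted tree on n nodes with height h. Then T can be embedded into a binary tree B (each node has at most two children) on a superset of its nodes such that the ancestor–descendant relation of T is preserved and the height of B is O(h + log n). -/
open Finset

noncomputable section
open scoped Classical

/-- A finite rooted tree on vertex set `V`: every vertex reaches the root by
iterating the parent map, and the root is its own parent. -/
structure RTree (V : Type) [Fintype V] [DecidableEq V] where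
  root : V
  parent : V → V
  parent_root : parent root = root
  reaches_root : ∀ v, ∃ k, parent^[k] v = root

namespace RTree

variable {V : Type} [Fintype V] [DecidableEq V] (T : RTree V)

/-- `u` is an ancestor of `v` (possibly `u = v`). -/
def Ancestor (u v : V) : Prop := ∃ k, T.parent^[k] v = u

/-- The depth of a vertex: its distance to the root. -/
def depth (v : V) : ℕ := Nat.find (T.reaches_root v)

/-- The height of the tree: the maximum depth. -/
def height : ℕ := Finset.univ.sup T.depth

/-- The number of descendants of `u` (including `u` itself). -/
def desc (u : V) : ℕ := (Finset.univ.filter (fun v => T.Ancestor u v)).card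

/-- The tree is binary: every vertex has at most two children. -/
def Binary : Prop :=
  ∀ u : V, (Finset.univ.filter (fun v => v ≠ T.root ∧ T.parent v = u)).card ≤ 2

/-- `x` is a leaf: it has no children. -/
def IsLeaf (x : V) : Prop := ∀ v : V, v ≠ T.root → T.parent v ≠ x

end RTree


/-!
Label every vertex by a node of the infinite binary heap on `ℕ` (root `1`, children `2i`,
`2i + 1`). The subtrees of the children of `u` occupy disjoint consecutive intervals
`[offset v, offset v + desc v)` of `[0, desc u)`. Inside its interval, the child `v` picks an
aligned dyadic block of length `2 ^ blockExp v > (desc v + 1) / 4`, and the label of `v` is the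
label of `u` followed by the binary address of that block, which has
`log (desc u) + 1 - blockExp v ≤ log (desc u) - log (desc v) + 2` bits. Disjoint blocks have
addresses that are not prefixes of one another, so a label is a heap ancestor of another exactly
when the vertices are ancestor and descendant, and labels are distinct. The bit counts telescope
along a root path to at most `2 h + log n`, so all labels fit in a complete binary tree of height
`2 h + log n + 1`.
-/

namespace RTree

variable {V : Type} [Fintype V] [DecidableEq V] (T : RTree V)

lemma iterate_parent_root (k : ℕ) : T.parent^[k] T.root = T.root :=
  Function.iterate_fixed T.parent_root k

lemma iterate_parent_depth (v : V) : T.parent^[T.depth v] v = T.root :=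
  Nat.find_spec (T.reaches_root v)

lemma depth_le_of_iterate_parent {v : V} {k : ℕ} (h : T.parent^[k] v = T.root) :
    T.depth v ≤ k :=
  Nat.find_min' _ h

lemma depth_parent {v : V} (hv : v ≠ T.root) : T.depth v = T.depth (T.parent v) + 1 := by
  have hpos : T.depth v ≠ 0 := fun h => hv (by simpa [h] using T.iterate_parent_depth v)
  have hle : T.depth (T.parent v) ≤ T.depth v - 1 := T.depth_le_of_iterate_parent <| by
    rw [← Function.iterate_succ_apply, Nat.succ_eq_add_one, Nat.sub_add_cancel (by omega),
      T.iterate_parent_depth]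
  have hge : T.depth v ≤ T.depth (T.parent v) + 1 := T.depth_le_of_iterate_parent <| by
    rw [Function.iterate_succ_apply, T.iterate_parent_depth]
  omega

lemma parent_ne_self {v : V} (hv : v ≠ T.root) : T.parent v ≠ v := fun h => by
  have := T.depth_parent hv
  rw [h] at this
  omega

theorem induction_parent {motive : V → Prop} (root : motive T.root)
    (parent : ∀ v, v ≠ T.root → motive (T.parent v) → motive v) (v : V) : motive v := by
  induction hd : T.depth v using Nat.strong_induction_on generalizing v with
  | _ d ih =>
    by_cases hv : v = T.root
    · exact hv ▸ root
    · exact parent v hv (ih _ (by rw [← hd, T.depth_parent hv]; omega) _ rfl)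

def children (u : V) : Finset V := {v | v ≠ T.root ∧ T.parent v = u}

def subtree (u : V) : Finset V := {v | T.Ancestor u v}

variable {T}

lemma Ancestor.refl (v : V) : T.Ancestor v v := ⟨0, rfl⟩

lemma Ancestor.trans {a b c : V} (hab : T.Ancestor a b) (hbc : T.Ancestor b c) :
    T.Ancestor a c := by
  obtain ⟨k, rfl⟩ := hab
  obtain ⟨j, rfl⟩ := hbc
  exact ⟨k + j, Function.iterate_add_apply _ _ _ _⟩

lemma ancestor_parent (v : V) : T.Ancestor (T.parent v) v := ⟨1, rfl⟩

lemma root_ancestor (v : V) : T.Ancestor T.root v := ⟨_, T.iterate_parent_depth v⟩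

lemma Ancestor.depth_le {u v : V} (h : T.Ancestor u v) : T.depth u ≤ T.depth v := by
  obtain ⟨k, rfl⟩ := h
  apply T.depth_le_of_iterate_parent
  rw [← Function.iterate_add_apply, add_comm, Function.iterate_add_apply,
    T.iterate_parent_depth, T.iterate_parent_root]

lemma Ancestor.ancestor_parent_of_ne {u v : V} (h : T.Ancestor u v) (hne : u ≠ v) :
    T.Ancestor u (T.parent v) := by
  obtain ⟨_ | k, rfl⟩ := h
  · exact absurd rfl hne
  · exact ⟨k, rfl⟩

lemma Ancestor.antisymm {u v : V} (huv : T.Ancestor u v) (hvu : T.Ancestor v u) : u = v := by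
  by_contra hne
  have hv : v ≠ T.root := by
    rintro rfl
    obtain ⟨k, rfl⟩ := huv
    exact hne (T.iterate_parent_root k)
  have h1 := (huv.ancestor_parent_of_ne hne).depth_le
  have h2 := hvu.depth_le
  have := T.depth_parent hv
  omega

lemma Ancestor.total {a b x : V} (ha : T.Ancestor a x) (hb : T.Ancestor b x) :
    T.Ancestor a b ∨ T.Ancestor b a := by
  obtain ⟨k, rfl⟩ := ha
  obtain ⟨j, rfl⟩ := hb
  rcases le_total j k with h | h
  · refine .inl ⟨k - j, ?_⟩
    rw [← Function.iterate_add_apply, Nat.sub_add_cancel h]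
  · refine .inr ⟨j - k, ?_⟩
    rw [← Function.iterate_add_apply, Nat.sub_add_cancel h]

lemma Ancestor.eq_of_parent_eq {v w : V} (h : T.Ancestor v w) (hv : v ≠ T.root)
    (hvw : T.parent v = T.parent w) : v = w := by
  by_contra hne
  have := h.ancestor_parent_of_ne hne
  rw [← hvw] at this
  exact T.parent_ne_self hv (this.antisymm (ancestor_parent v)).symm

lemma Ancestor.exists_child {u v : V} (h : T.Ancestor u v) (hne : u ≠ v) :
    ∃ w, w ≠ T.root ∧ T.parent w = u ∧ T.Ancestor w v := by
  have hk : ∃ k, T.parent^[k + 1] v = u := by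
    obtain ⟨_ | k, hk⟩ := h
    · exact absurd hk hne.symm
    · exact ⟨k, hk⟩
  have hpw : T.parent (T.parent^[Nat.find hk] v) = u := by
    rw [← Function.iterate_succ_apply' T.parent]
    exact Nat.find_spec hk
  have hwu : T.parent^[Nat.find hk] v ≠ u := by
    rcases hj : Nat.find hk with _ | j
    · exact hne.symm
    · exact Nat.find_min hk (show j < Nat.find hk by omega)
  refine ⟨_, fun hw => hwu ?_, hpw, ⟨_, rfl⟩⟩
  rw [hw, T.parent_root] at hpw
  rw [hw, hpw]

@[simp] lemma mem_children {u v : V} : v ∈ T.children u ↔ v ≠ T.root ∧ T.parent v = u := by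
  simp [children]

@[simp] lemma mem_subtree {u v : V} : v ∈ T.subtree u ↔ T.Ancestor u v := by
  simp [subtree]

lemma desc_eq_card_subtree (u : V) : T.desc u = #(T.subtree u) := rfl

lemma desc_pos (u : V) : 0 < T.desc u :=
  card_pos.mpr ⟨u, mem_subtree.mpr (.refl u)⟩

lemma pairwiseDisjoint_subtree_children (u : V) :
    (T.children u : Set V).PairwiseDisjoint T.subtree := by
  intro w hw w' hw' hne
  rw [mem_coe, mem_children] at hw hw'
  refine disjoint_left.mpr fun x hwx hw'x => hne ?_
  rcases (mem_subtree.mp hwx).total (mem_subtree.mp hw'x) with h | h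
  · exact h.eq_of_parent_eq hw.1 (hw.2.trans hw'.2.symm)
  · exact (h.eq_of_parent_eq hw'.1 (hw'.2.trans hw.2.symm)).symm

lemma sum_desc_children_lt (u : V) : ∑ w ∈ T.children u, T.desc w < T.desc u := by
  simp_rw [desc_eq_card_subtree]
  rw [← card_biUnion (pairwiseDisjoint_subtree_children u)]
  refine card_lt_card ⟨fun x hx => ?_, fun h => ?_⟩
  · obtain ⟨w, hw, hwx⟩ := mem_biUnion.mp hx
    rw [mem_children] at hw
    exact mem_subtree.mpr ((hw.2 ▸ ancestor_parent w).trans (mem_subtree.mp hwx))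
  · obtain ⟨w, hw, huw⟩ := mem_biUnion.mp (h (mem_subtree.mpr (.refl u)))
    rw [mem_children] at hw
    have := (hw.2 ▸ ancestor_parent w : T.Ancestor u w).antisymm (mem_subtree.mp huw)
    exact T.parent_ne_self hw.1 (hw.2.trans this)

lemma desc_lt_desc_parent {v : V} (hv : v ≠ T.root) : T.desc v < T.desc (T.parent v) :=
  (single_le_sum (fun _ _ => Nat.zero_le _) (mem_children.mpr ⟨hv, rfl⟩)).trans_lt
    (sum_desc_children_lt _)

end RTree

lemma Nat.log_two_mul_pow_add {P ℓ q : ℕ} (hP : P ≠ 0) (hq : q < 2 ^ ℓ) :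
    Nat.log 2 (P * 2 ^ ℓ + q) = Nat.log 2 P + ℓ := by
  have hlo := Nat.pow_log_le_self 2 hP
  have hhi := Nat.lt_pow_succ_log_self one_lt_two P
  refine Nat.log_eq_of_pow_le_of_lt_pow ?_ ?_
  · rw [pow_add]
    exact (Nat.mul_le_mul_right _ hlo).trans (Nat.le_add_right _ _)
  · calc P * 2 ^ ℓ + q < (P + 1) * 2 ^ ℓ := by rw [add_mul, one_mul]; omega
      _ ≤ 2 ^ (Nat.log 2 P + 1) * 2 ^ ℓ := Nat.mul_le_mul_right _ hhi
      _ = 2 ^ (Nat.log 2 P + ℓ + 1) := by rw [← pow_add]; ring_nf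

/-- `i` is an ancestor of `j` in the infinite binary heap on `ℕ`, where the parent of `j` is
`j / 2`. -/
def HeapAncestor (i j : ℕ) : Prop := ∃ d, j / 2 ^ d = i

namespace HeapAncestor

lemma refl (i : ℕ) : HeapAncestor i i := ⟨0, by simp⟩

lemma trans {a b c : ℕ} (hab : HeapAncestor a b) (hbc : HeapAncestor b c) :
    HeapAncestor a c := by
  obtain ⟨d, rfl⟩ := hab
  obtain ⟨e, rfl⟩ := hbc
  exact ⟨e + d, by rw [Nat.div_div_eq_div_mul, ← pow_add]⟩

lemma of_mul_pow_add (P : ℕ) {ℓ q : ℕ} (hq : q < 2 ^ ℓ) : HeapAncestor P (P * 2 ^ ℓ + q) :=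
  ⟨ℓ, by
    rw [mul_comm, Nat.mul_add_div (Nat.two_pow_pos ℓ), Nat.div_eq_of_lt hq, add_zero]⟩

lemma le {i j : ℕ} (h : HeapAncestor i j) : i ≤ j := by
  obtain ⟨d, rfl⟩ := h
  exact Nat.div_le_self _ _

lemma total {a b c : ℕ} (ha : HeapAncestor a c) (hb : HeapAncestor b c) :
    HeapAncestor a b ∨ HeapAncestor b a := by
  obtain ⟨d, rfl⟩ := ha
  obtain ⟨e, rfl⟩ := hb
  rcases le_total d e with h | h
  · refine .inr ⟨e - d, ?_⟩
    rw [Nat.div_div_eq_div_mul, ← pow_add, Nat.add_sub_cancel' h]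
  · refine .inl ⟨d - e, ?_⟩
    rw [Nat.div_div_eq_div_mul, ← pow_add, Nat.add_sub_cancel' h]

/-- Heap nodes `P * 2 ^ ℓ + q` below a common node `P` correspond to dyadic blocks
`[q * 2 ^ k, (q + 1) * 2 ^ k)` at the common depth `ℓ + k`; heap ancestry forces the blocks to
meet. -/
lemma block_mem {P ℓ ℓ' q q' k k' : ℕ} (hP : P ≠ 0) (hq : q < 2 ^ ℓ) (hq' : q' < 2 ^ ℓ')
    (hk : ℓ + k = ℓ' + k') (h : HeapAncestor (P * 2 ^ ℓ + q) (P * 2 ^ ℓ' + q')) :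
    q * 2 ^ k ≤ q' * 2 ^ k' ∧ q' * 2 ^ k' < (q + 1) * 2 ^ k := by
  obtain ⟨d, hd⟩ := h
  have hpos : 2 ^ d ≤ P * 2 ^ ℓ' + q' := by
    by_contra hlt
    rw [Nat.div_eq_of_lt (not_le.mp hlt)] at hd
    exact hP (by nlinarith [Nat.two_pow_pos ℓ])
  have hd_le : d ≤ Nat.log 2 P + ℓ' := by
    rw [← Nat.log_two_mul_pow_add hP hq']
    exact Nat.le_log_of_pow_le one_lt_two hpos
  have hlog := congrArg (Nat.log 2) hd
  rw [Nat.log_div_base_pow, Nat.log_two_mul_pow_add hP hq', Nat.log_two_mul_pow_add hP hq] at hlog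
  obtain rfl : ℓ' = ℓ + d := by omega
  obtain rfl : k = k' + d := by omega
  rw [pow_add, ← mul_assoc, mul_comm, Nat.mul_add_div (Nat.two_pow_pos d), mul_comm] at hd
  have hqq : q = q' / 2 ^ d := by omega
  have h1 : q * 2 ^ d ≤ q' := hqq ▸ Nat.div_mul_le_self q' (2 ^ d)
  have h2 : q' < (q + 1) * 2 ^ d :=
    hqq ▸ (Nat.div_lt_iff_lt_mul (Nat.two_pow_pos d)).mp (Nat.lt_succ_self _)
  constructor
  · calc q * 2 ^ (k' + d) = q * 2 ^ d * 2 ^ k' := by ring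
      _ ≤ q' * 2 ^ k' := Nat.mul_le_mul_right _ h1
  · calc q' * 2 ^ k' < (q + 1) * 2 ^ d * 2 ^ k' :=
          Nat.mul_lt_mul_of_pos_right h2 (Nat.two_pow_pos k')
      _ = (q + 1) * 2 ^ (k' + d) := by ring

end HeapAncestor

namespace RTree

section Block

variable {V : Type} [Fintype V] [DecidableEq V] (T : RTree V)

def blockExp (v : V) : ℕ := Nat.log 2 ((T.desc v + 1) / 2)

def codeLen (v : V) : ℕ := Nat.log 2 (T.desc (T.parent v)) + 1 - T.blockExp v

variable {T}

lemma two_pow_blockExp_mul_two_le (v : V) : 2 ^ T.blockExp v * 2 ≤ T.desc v + 1 := by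
  have := T.desc_pos v
  exact (Nat.le_div_iff_mul_le two_pos).mp (Nat.pow_log_le_self 2 (by omega))

lemma log_desc_le_blockExp_add_one (v : V) : Nat.log 2 (T.desc v) ≤ T.blockExp v + 1 := by
  have := Nat.log_mono_right (b := 2) (show T.desc v ≤ T.desc v + 1 by omega)
  rw [blockExp, Nat.log_div_base]
  omega

lemma blockExp_le_log_desc_parent {v : V} (hv : v ≠ T.root) :
    T.blockExp v ≤ Nat.log 2 (T.desc (T.parent v)) := by
  refine Nat.le_log_of_pow_le one_lt_two ?_
  have := two_pow_blockExp_mul_two_le (T := T) v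
  have := desc_lt_desc_parent hv
  omega

lemma codeLen_add_blockExp {v : V} (hv : v ≠ T.root) :
    T.codeLen v + T.blockExp v = Nat.log 2 (T.desc (T.parent v)) + 1 := by
  have := blockExp_le_log_desc_parent hv
  rw [codeLen]
  omega

lemma codeLen_pos {v : V} (hv : v ≠ T.root) : 0 < T.codeLen v := by
  have := blockExp_le_log_desc_parent hv
  rw [codeLen]
  omega

end Block

variable {V : Type} [Fintype V] [DecidableEq V] [LinearOrder V] (T : RTree V)

def offset (v : V) : ℕ := ∑ w ∈ T.children (T.parent v) with w < v, T.desc w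

/-- `⌈offset v / 2 ^ blockExp v⌉`: the first aligned block of length `2 ^ blockExp v` that starts
at or after `offset v`. -/
def blockIdx (v : V) : ℕ := (T.offset v + 2 ^ T.blockExp v - 1) / 2 ^ T.blockExp v

def heapIndex (v : V) : ℕ :=
  if hv : v = T.root then 1 else heapIndex (T.parent v) * 2 ^ T.codeLen v + T.blockIdx v
termination_by T.depth v
decreasing_by rw [T.depth_parent hv]; omega

variable {T}

lemma offset_add_desc {v : V} (hv : v ≠ T.root) :
    T.offset v + T.desc v = ∑ w ∈ T.children (T.parent v) with w ≤ v, T.desc w := by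
  have hmem : v ∈ T.children (T.parent v) := mem_children.mpr ⟨hv, rfl⟩
  have : {w ∈ T.children (T.parent v) | w ≤ v} =
      insert v {w ∈ T.children (T.parent v) | w < v} := by
    ext w
    simp only [mem_filter, mem_insert, le_iff_lt_or_eq]
    constructor
    · rintro ⟨hw, h | rfl⟩
      exacts [.inr ⟨hw, h⟩, .inl rfl]
    · rintro (rfl | ⟨hw, h⟩)
      exacts [⟨hmem, .inr rfl⟩, ⟨hw, .inl h⟩]
  rw [this, sum_insert (by simp), add_comm, offset]

lemma offset_add_desc_le_offset {a b : V} (ha : a ≠ T.root) (hab : T.parent a = T.parent b)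
    (hlt : a < b) : T.offset a + T.desc a ≤ T.offset b := by
  rw [offset_add_desc ha, offset, hab]
  exact sum_le_sum_of_subset (monotone_filter_right _ fun w _ (h : w ≤ a) => h.trans_lt hlt)

lemma offset_add_desc_lt {v : V} (hv : v ≠ T.root) :
    T.offset v + T.desc v < T.desc (T.parent v) := by
  rw [offset_add_desc hv]
  exact (sum_le_sum_of_subset (filter_subset _ _)).trans_lt (sum_desc_children_lt _)

lemma offset_le_blockIdx_mul (v : V) : T.offset v ≤ T.blockIdx v * 2 ^ T.blockExp v := by
  have := Nat.lt_div_mul_add (a := T.offset v + 2 ^ T.blockExp v - 1)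
    (Nat.two_pow_pos (T.blockExp v))
  rw [blockIdx]
  omega

lemma blockIdx_succ_mul_le (v : V) :
    (T.blockIdx v + 1) * 2 ^ T.blockExp v ≤ T.offset v + T.desc v := by
  have := Nat.div_mul_le_self (T.offset v + 2 ^ T.blockExp v - 1) (2 ^ T.blockExp v)
  have := two_pow_blockExp_mul_two_le (T := T) v
  rw [blockIdx, add_mul, one_mul]
  omega

lemma blockIdx_lt {v : V} (hv : v ≠ T.root) : T.blockIdx v < 2 ^ T.codeLen v := by
  have h := (blockIdx_succ_mul_le v).trans_lt ((offset_add_desc_lt hv).trans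
    (Nat.lt_pow_succ_log_self one_lt_two _))
  rw [Nat.succ_eq_add_one, ← codeLen_add_blockExp hv, pow_add] at h
  exact Nat.lt_of_succ_le (Nat.le_of_mul_le_mul_right h.le (Nat.two_pow_pos _))

variable (T) in
lemma heapIndex_root : T.heapIndex T.root = 1 := by
  rw [heapIndex, dif_pos rfl]

lemma heapIndex_of_ne_root {v : V} (hv : v ≠ T.root) :
    T.heapIndex v = T.heapIndex (T.parent v) * 2 ^ T.codeLen v + T.blockIdx v := by
  rw [heapIndex, dif_neg hv]

variable (T) in
lemma heapIndex_pos (v : V) : 0 < T.heapIndex v := by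
  induction v using T.induction_parent with
  | root => rw [heapIndex_root]; exact one_pos
  | parent v hv ih =>
    rw [heapIndex_of_ne_root hv]
    exact Nat.lt_add_right _ (Nat.mul_pos ih (Nat.two_pow_pos _))

lemma heapIndex_parent_lt {v : V} (hv : v ≠ T.root) :
    T.heapIndex (T.parent v) < T.heapIndex v := by
  rw [heapIndex_of_ne_root hv]
  calc T.heapIndex (T.parent v) < T.heapIndex (T.parent v) * 2 ^ T.codeLen v :=
        lt_mul_right (T.heapIndex_pos _) (Nat.one_lt_two_pow (codeLen_pos hv).ne')
    _ ≤ _ := Nat.le_add_right _ _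

lemma heapAncestor_heapIndex_parent {v : V} (hv : v ≠ T.root) :
    HeapAncestor (T.heapIndex (T.parent v)) (T.heapIndex v) :=
  heapIndex_of_ne_root hv ▸ .of_mul_pow_add _ (blockIdx_lt hv)

lemma Ancestor.heapAncestor_heapIndex {u v : V} (h : T.Ancestor u v) :
    HeapAncestor (T.heapIndex u) (T.heapIndex v) := by
  induction v using T.induction_parent generalizing u with
  | root => rw [h.antisymm (root_ancestor u)]; exact .refl _
  | parent v hv ih =>
    by_cases huv : u = v
    · exact huv ▸ .refl _
    · exact (ih (h.ancestor_parent_of_ne huv)).trans (heapAncestor_heapIndex_parent hv)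

lemma eq_of_heapAncestor_heapIndex {a b : V} (ha : a ≠ T.root) (hb : b ≠ T.root)
    (hab : T.parent a = T.parent b) (h : HeapAncestor (T.heapIndex a) (T.heapIndex b)) :
    a = b := by
  rw [heapIndex_of_ne_root ha, heapIndex_of_ne_root hb, hab] at h
  obtain ⟨hlo, hhi⟩ := h.block_mem (T.heapIndex_pos _).ne' (blockIdx_lt ha) (blockIdx_lt hb)
    (by rw [codeLen_add_blockExp ha, codeLen_add_blockExp hb, hab])
  have ha₁ := offset_le_blockIdx_mul (T := T) a
  have ha₂ := blockIdx_succ_mul_le (T := T) a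
  have hb₁ := offset_le_blockIdx_mul (T := T) b
  have hb₂ := blockIdx_succ_mul_le (T := T) b
  rw [add_mul, one_mul] at ha₂ hb₂ hhi
  rcases lt_trichotomy a b with hlt | heq | hgt
  · have := offset_add_desc_le_offset ha hab hlt
    omega
  · exact heq
  · have := offset_add_desc_le_offset hb hab.symm hgt
    have := Nat.two_pow_pos (T.blockExp b)
    omega

lemma ancestor_of_heapAncestor_heapIndex {u v : V}
    (h : HeapAncestor (T.heapIndex u) (T.heapIndex v)) : T.Ancestor u v := by
  induction u using T.induction_parent generalizing v with
  | root => exact root_ancestor v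
  | parent u hu ih =>
    have hne : T.parent u ≠ v := by
      rintro rfl
      exact h.le.not_gt (heapIndex_parent_lt hu)
    obtain ⟨w, hw, hwu, hwv⟩ :=
      (ih ((heapAncestor_heapIndex_parent hu).trans h)).exists_child hne
    rcases h.total hwv.heapAncestor_heapIndex with huw | hwu'
    · rwa [eq_of_heapAncestor_heapIndex hu hw hwu.symm huw]
    · rwa [← eq_of_heapAncestor_heapIndex hw hu hwu hwu']

variable (T) in
lemma heapIndex_injective : Function.Injective T.heapIndex := fun u v h =>
  (ancestor_of_heapAncestor_heapIndex (T := T) ⟨0, by simp [h]⟩).antisymm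
    (ancestor_of_heapAncestor_heapIndex ⟨0, by simp [h]⟩)

variable (T) in
lemma log_heapIndex_add_log_desc_le (v : V) :
    Nat.log 2 (T.heapIndex v) + Nat.log 2 (T.desc v) ≤
      2 * T.depth v + Nat.log 2 (T.desc T.root) := by
  induction v using T.induction_parent with
  | root => simp [heapIndex_root]
  | parent v hv ih =>
    rw [heapIndex_of_ne_root hv,
      Nat.log_two_mul_pow_add (T.heapIndex_pos _).ne' (blockIdx_lt hv), T.depth_parent hv]
    have := codeLen_add_blockExp hv
    have := log_desc_le_blockExp_add_one (T := T) v
    omega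

variable (T) in
lemma heapIndex_lt_two_pow (v : V) :
    T.heapIndex v < 2 ^ (2 * T.height + Nat.log 2 (Fintype.card V) + 1) := by
  have hdepth : T.depth v ≤ T.height := le_sup (mem_univ v)
  have hdesc := Nat.log_mono_right (b := 2) (card_le_univ (T.subtree T.root))
  have := T.log_heapIndex_add_log_desc_le v
  rw [← desc_eq_card_subtree] at hdesc
  exact (Nat.lt_pow_succ_log_self one_lt_two _).trans_le (Nat.pow_le_pow_right two_pos (by omega))

end RTree

/-- Vertex `j` of `Fin m` stands for the heap node `j + 1`, whose parent is `(j + 1) / 2`. -/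
def heapParent (m : ℕ) (j : Fin m) : Fin m := ⟨(j + 1) / 2 - 1, by omega⟩

/-- Truncated subtraction keeps this correct also for `2 ^ d > j + 1`, where the root is
reached. -/
lemma heapParent_iterate_val (m d : ℕ) (j : Fin m) :
    ((heapParent m)^[d] j : ℕ) = (j + 1) / 2 ^ d - 1 := by
  induction d with
  | zero => simp
  | succ d ih =>
    rw [Function.iterate_succ_apply', heapParent, Fin.val_mk, ih, pow_succ,
      ← Nat.div_div_eq_div_mul]
    omega

lemma heapParent_iterate_log (m : ℕ) (j : Fin m) :
    ((heapParent m)^[Nat.log 2 (j + 1)] j : ℕ) = 0 := by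
  have := (Nat.div_lt_iff_lt_mul (Nat.two_pow_pos _)).mpr <|
    (Nat.lt_pow_succ_log_self one_lt_two (j + 1)).trans_eq (Nat.pow_succ' ..)
  rw [heapParent_iterate_val]
  omega

def heapTree (m : ℕ) (hm : 0 < m) : RTree (Fin m) where
  root := ⟨0, hm⟩
  parent := heapParent m
  parent_root := Fin.ext (by simp [heapParent])
  reaches_root j := ⟨_, Fin.ext (heapParent_iterate_log m j)⟩

@[simp] lemma heapTree_parent_val {m : ℕ} (hm : 0 < m) (j : Fin m) :
    ((heapTree m hm).parent j : ℕ) = (j + 1) / 2 - 1 := rfl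

lemma heapTree_ancestor {m : ℕ} (hm : 0 < m) {i j : Fin m}
    (h : HeapAncestor (i + 1) (j + 1)) : (heapTree m hm).Ancestor i j := by
  obtain ⟨d, hd⟩ := h
  exact ⟨d, Fin.ext <| by rw [heapTree, heapParent_iterate_val, hd, Nat.add_sub_cancel]⟩

lemma heapTree_binary (m : ℕ) (hm : 0 < m) : (heapTree m hm).Binary := by
  intro u
  refine (card_le_card_of_injOn Fin.val (t := {2 * (u : ℕ) + 1, 2 * (u : ℕ) + 2}) ?_
    Fin.val_injective.injOn).trans card_le_two
  intro v hv
  rw [coe_filter] at hv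
  obtain ⟨hv0, hvu⟩ := hv.2
  have hv0 : (v : ℕ) ≠ 0 := fun h => hv0 (Fin.ext h)
  have hvu := congrArg Fin.val hvu
  rw [heapTree_parent_val] at hvu
  simp only [coe_insert, coe_singleton, Set.mem_insert_iff, Set.mem_singleton_iff]
  omega

lemma heapTree_height_le (m : ℕ) (hm : 0 < m) : (heapTree m hm).height ≤ Nat.log 2 m :=
  Finset.sup_le fun j _ =>
    (RTree.depth_le_of_iterate_parent _ (Fin.ext (heapParent_iterate_log m j))).trans
      (Nat.log_mono_right j.isLt)

/-- Any rooted tree `T` on `n` nodes with height `h` embeds into a binary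
tree `B` (on a superset of its nodes), preserving the ancestor–descendant relation and
with the root mapped to the root, such that the height of `B` is `O(h + log n)`. -/
theorem embed_into_binary_tree :
    ∃ c : ℕ, ∀ (n : ℕ) (T : RTree (Fin n)),
      ∃ (m : ℕ) (B : RTree (Fin m)) (f : Fin n ↪ Fin m),
        f T.root = B.root ∧ B.Binary ∧
        (∀ u v : Fin n, T.Ancestor u v → B.Ancestor (f u) (f v)) ∧
        B.height ≤ c * (T.height + Nat.log 2 n + 1) := by
  refine ⟨2, fun n T => ?_⟩
  set L := 2 * T.height + Nat.log 2 n with hL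
  have hpos := T.heapIndex_pos
  have hlt (v : Fin n) : T.heapIndex v - 1 < 2 ^ (L + 1) := by
    have := T.heapIndex_lt_two_pow v
    rw [Fintype.card_fin, ← hL] at this
    omega
  let f : Fin n ↪ Fin (2 ^ (L + 1)) := ⟨fun v => ⟨T.heapIndex v - 1, hlt v⟩, fun u v h => by
    have := hpos u; have := hpos v
    exact T.heapIndex_injective (by simp only [Fin.mk.injEq] at h; omega)⟩
  have hf (v : Fin n) : (f v : ℕ) + 1 = T.heapIndex v := Nat.sub_add_cancel (hpos v)
  refine ⟨_, heapTree _ (Nat.two_pow_pos _), f, ?_, heapTree_binary _ _,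
    fun u v h => heapTree_ancestor _ ?_, ?_⟩
  · ext
    show T.heapIndex T.root - 1 = 0
    rw [RTree.heapIndex_root]
  · rw [hf, hf]
    exact h.heapAncestor_heapIndex
  · refine (heapTree_height_le _ _).trans ?_
    rw [Nat.log_pow one_lt_two]
    omega
end
end

section
/- For every finite tree T on n vertices, there exists a category system S such that greedy category-based routing works between all pairs of vertices of T and memdim(S) = O((diam(T) + log n)^2). -/
open Finset SimpleGraph

variable {V : Type*}

set_option linter.unusedSectionVars false
namespace TreeAux

open SimpleGraph Walk Finset

variable {V : Type*} [DecidableEq V] {T : SimpleGraph V}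

theorem isPath_of_len_eq_dist {u v : V} (w : T.Walk u v) (h : w.length = T.dist u v) :
    w.IsPath := by
  have h1 : w.length ≤ w.bypass.length := h ▸ SimpleGraph.dist_le w.bypass
  have h2 := w.bypass_eq_self_of_length_le h1
  rw [← h2]
  exact w.bypass_isPath

section

noncomputable def P (hup : ∀ u v : V, ∃! p : T.Walk u v, p.IsPath) (u v : V) : T.Walk u v := (hup u v).exists.choose

theorem P_isPath (hup : ∀ u v : V, ∃! p : T.Walk u v, p.IsPath) (u v : V) : (P hup u v).IsPath := (hup u v).exists.choose_spec

theorem eq_P (hup : ∀ u v : V, ∃! p : T.Walk u v, p.IsPath) {u v : V} (q : T.Walk u v) (hq : q.IsPath) : q = P hup u v := by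
  obtain ⟨p, _, hunq⟩ := hup u v
  rw [hunq q hq, hunq _ (P_isPath hup u v)]

theorem P_length (hc : T.Connected) (hup : ∀ u v : V, ∃! p : T.Walk u v, p.IsPath) (u v : V) : (P hup u v).length = T.dist u v := by
  obtain ⟨w, hw⟩ := hc.exists_walk_length_eq_dist u v
  rw [eq_P hup w (isPath_of_len_eq_dist w hw)] at hw
  exact hw

theorem dist_add_dist_le_length {u v m : V} (w : T.Walk u v) (hm : m ∈ w.support) :
    T.dist u m + T.dist m v ≤ w.length := by
  have hspec := w.take_spec hm
  have hlen : (w.takeUntil m hm).length + (w.dropUntil m hm).length = w.length := by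
    rw [← Walk.length_append, hspec]
  have h1 := SimpleGraph.dist_le (w.takeUntil m hm)
  have h2 := SimpleGraph.dist_le (w.dropUntil m hm)
  omega

theorem adj_dist_one (hc : T.Connected) {a b : V} (hab : T.Adj a b) : T.dist a b = 1 := by
  have h1 : T.dist a b ≤ 1 := by
    simpa using SimpleGraph.dist_le (Walk.cons hab Walk.nil)
  have h2 : 0 < T.dist a b := hc.pos_dist_of_ne hab.ne
  omega

theorem no_tie (hc : T.Connected) (hup : ∀ u v : V, ∃! p : T.Walk u v, p.IsPath) {a b : V} (hab : T.Adj a b) (x : V) : T.dist x a ≠ T.dist x b := by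
  intro h
  have hone : T.dist a b = 1 := adj_dist_one hc hab
  have hbx : ((P hup x b).reverse).IsPath := (P_isPath hup x b).reverse
  have hna : a ∉ ((P hup x b).reverse).support := by
    rw [Walk.support_reverse, List.mem_reverse]
    intro hmem
    have h3 := dist_add_dist_le_length (P hup x b) hmem
    rw [P_length hc hup] at h3
    omega
  have hW : (Walk.cons hab ((P hup x b).reverse)).IsPath := hbx.cons hna
  have hrev : ((P hup x a).reverse).IsPath := (P_isPath hup x a).reverse
  have e1 := eq_P hup _ hW
  have e2 := eq_P hup _ hrev
  have hlen : (Walk.cons hab ((P hup x b).reverse)).length = ((P hup x a).reverse).length := by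
    rw [e1, e2]
  rw [Walk.length_cons, Walk.length_reverse, Walk.length_reverse,
    P_length hc hup, P_length hc hup] at hlen
  omega

theorem adj_cases (hc : T.Connected) (hup : ∀ u v : V, ∃! p : T.Walk u v, p.IsPath) {s u : V} (hsu : T.Adj s u) (t : V) :
    T.dist t u + 1 = T.dist t s ∨ T.dist t s + 1 = T.dist t u := by
  have h1 : T.dist t s ≤ T.dist t u + T.dist u s := hc.dist_triangle
  have h2 : T.dist t u ≤ T.dist t s + T.dist s u := hc.dist_triangle
  have h3 : T.dist u s = 1 := adj_dist_one hc hsu.symm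
  have h4 : T.dist s u = 1 := adj_dist_one hc hsu
  have h5 : T.dist t s ≠ T.dist t u := no_tie hc hup hsu t
  omega

theorem side_succ (hc : T.Connected) (hup : ∀ u v : V, ∃! p : T.Walk u v, p.IsPath) {a b x : V} (hab : T.Adj a b) (h : T.dist x a < T.dist x b) :
    T.dist x b = T.dist x a + 1 := by
  rcases adj_cases hc hup hab x with h' | h' <;> omega

theorem cross_edge (hc : T.Connected) (hup : ∀ u v : V, ∃! p : T.Walk u v, p.IsPath) {a b v w : V} (hab : T.Adj a b) (hvw : T.Adj v w)
    (hv : T.dist v b < T.dist v a) (hw : T.dist w a < T.dist w b) : v = b ∧ w = a := by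
  have hv1 : T.dist v a = T.dist v b + 1 := side_succ hc hup hab.symm hv
  have hw1 : T.dist w b = T.dist w a + 1 := side_succ hc hup hab hw
  have t1 : T.dist w b ≤ T.dist w v + T.dist v b := hc.dist_triangle
  have t2 : T.dist v a ≤ T.dist v w + T.dist w a := hc.dist_triangle
  have hd1 : T.dist v w = 1 := adj_dist_one hc hvw
  have hd2 : T.dist w v = 1 := adj_dist_one hc hvw.symm
  have hkm : T.dist w a = T.dist v b := by omega
  have hXlen : (Walk.cons hvw ((P hup a w).reverse)).length = T.dist v a := by
    have e : T.dist a w = T.dist w a := dist_comm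
    rw [Walk.length_cons, Walk.length_reverse, P_length hc hup]
    omega
  have hX : (Walk.cons hvw ((P hup a w).reverse)).IsPath := isPath_of_len_eq_dist _ hXlen
  have hYlen : (Walk.cons hab (P hup b v)).length = T.dist a v := by
    have e : T.dist a v = T.dist v a := dist_comm
    have e2 : T.dist b v = T.dist v b := dist_comm
    rw [Walk.length_cons, P_length hc hup]
    omega
  have hY : (Walk.cons hab (P hup b v)).IsPath := isPath_of_len_eq_dist _ hYlen
  have eX := eq_P hup _ hX
  have eY := eq_P hup _ hY
  have hw_in : w ∈ (P hup v a).support := by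
    rw [← eX, Walk.support_cons]
    exact List.mem_cons_of_mem _
      (by rw [Walk.support_reverse, List.mem_reverse]; exact (P hup a w).end_mem_support)
  have ePrev : (P hup a v).reverse = P hup v a := eq_P hup _ (P_isPath hup a v).reverse
  have hw_in2 : w ∈ (P hup a v).support := by
    rw [← ePrev, Walk.support_reverse, List.mem_reverse] at hw_in
    exact hw_in
  rw [← eY, Walk.support_cons] at hw_in2
  rcases List.mem_cons.mp hw_in2 with hwa | hwmem
  · have hz : T.dist w a = 0 := by rw [hwa]; exact SimpleGraph.dist_self
    have hvb : v = b := by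
      have : T.dist v b = 0 := by omega
      exact (hc.dist_eq_zero_iff).mp this
    exact ⟨hvb, hwa⟩
  · exfalso
    have h5 := dist_add_dist_le_length (P hup b v) hwmem
    rw [P_length hc hup] at h5
    have c1 : T.dist b w = T.dist w b := dist_comm
    have c2 : T.dist b v = T.dist v b := dist_comm
    omega

theorem nexthop (hc : T.Connected) (hup : ∀ u v : V, ∃! p : T.Walk u v, p.IsPath) {x y : V} (hxy : x ≠ y) :
    ∃ u, T.Adj x u ∧ T.dist u y + 1 = T.dist x y := by
  obtain ⟨w, hw⟩ := hc.exists_walk_length_eq_dist x y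
  cases w with
  | nil => exact absurd ((hc.dist_eq_zero_iff).mp (by simpa using hw.symm)) hxy
  | @cons _ z _ h q =>
    refine ⟨z, h, ?_⟩
    have h1 : T.dist z y ≤ q.length := SimpleGraph.dist_le q
    have h2 : T.dist x y ≤ T.dist x z + T.dist z y := hc.dist_triangle
    have h4 : T.dist x z = 1 := adj_dist_one hc h
    have h3 : q.length + 1 = T.dist x y := by simpa [Walk.length_cons] using hw
    omega

theorem cross (hc : T.Connected) (hup : ∀ u v : V, ∃! p : T.Walk u v, p.IsPath) {a b : V} (hab : T.Adj a b) :
    ∀ n x y, T.dist x y = n → T.dist x a < T.dist x b → T.dist y b < T.dist y a →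
      T.dist x y = T.dist x a + 1 + T.dist b y := by
  intro n
  induction n using Nat.strong_induction_on with
  | _ n IH =>
    intro x y hn hx hy
    have hxy : x ≠ y := by rintro rfl; omega
    obtain ⟨u, hadj, hu⟩ := nexthop hc hup hxy
    rcases Nat.lt_or_ge (T.dist u a) (T.dist u b) with hua | hub
    · have hrec := IH (T.dist u y) (by omega) u y rfl hua hy
      have c1 : T.dist a u = T.dist u a := dist_comm
      have c2 : T.dist a x = T.dist x a := dist_comm
      have t3 : T.dist x y ≤ T.dist x a + T.dist a y := hc.dist_triangle
      have t4 : T.dist a y ≤ T.dist a b + T.dist b y := hc.dist_triangle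
      have t5 : T.dist a b = 1 := adj_dist_one hc hab
      rcases adj_cases hc hup hadj a with h1 | h1 <;> omega
    · have hne := no_tie hc hup hab u
      have hub' : T.dist u b < T.dist u a := by omega
      obtain ⟨h5, h6⟩ := cross_edge hc hup hab hadj.symm hub' hx
      have hz : T.dist x a = 0 := by rw [h6]; exact SimpleGraph.dist_self
      have hby : T.dist u y = T.dist b y := by rw [h5]
      omega

theorem anc_unique (hc : T.Connected) (hup : ∀ u v : V, ∃! p : T.Walk u v, p.IsPath) :
    ∀ n (r v b b' : V), T.dist r v = n →
      T.dist r v = T.dist r b + T.dist b v → T.dist r v = T.dist r b' + T.dist b' v →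
      T.dist r b = T.dist r b' → b = b' := by
  intro n
  induction n using Nat.strong_induction_on with
  | _ n IH =>
    intro r v b b' hn hb hb' heq
    by_cases hj : T.dist r b = T.dist r v
    · have h1 : T.dist b v = 0 := by omega
      have h2 : T.dist b' v = 0 := by omega
      rw [(hc.dist_eq_zero_iff).mp h1, (hc.dist_eq_zero_iff).mp h2]
    · have hjlt : T.dist r b < T.dist r v := by omega
      have hvr : v ≠ r := by
        intro h
        subst h
        rw [SimpleGraph.dist_self] at hjlt
        omega
      obtain ⟨w, hadj, hw⟩ := nexthop hc hup hvr
      have c1 : T.dist w r = T.dist r w := dist_comm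
      have c2 : T.dist v r = T.dist r v := dist_comm
      have key : ∀ bb : V, T.dist r v = T.dist r bb + T.dist bb v → T.dist r bb < T.dist r v →
          T.dist r w = T.dist r bb + T.dist bb w := by
        intro bb hbb hlt
        rcases adj_cases hc hup hadj bb with h1 | h1
        · omega
        · exfalso
          have hs1 : T.dist r w < T.dist r v := by omega
          have hs2 : T.dist bb v < T.dist bb w := by omega
          have hcr := cross hc hup hadj.symm (T.dist r bb) r bb rfl hs1 hs2
          have c3 : T.dist v bb = T.dist bb v := dist_comm
          omega
      exact IH (T.dist r w) (by omega) r w b b' rfl (key b hb hjlt)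
        (key b' hb' (by omega)) heq

end
end TreeAux

set_option maxHeartbeats 1000000

/-- For every finite tree `T` on `n` vertices there is a category system
for which greedy routing works between all pairs and whose membership dimension is
`O((diam(T) + log n)^2)`. -/
theorem tree_routing_memdim :
    ∃ c : ℕ, ∀ (V : Type) (_ : Fintype V) (_ : DecidableEq V) (T : SimpleGraph V),
      T.IsTree →
      ∃ S : Finset (Finset V),
        RoutingWorks T S ∧
          memdim S ≤ c * (T.diam + Nat.log 2 (Fintype.card V) + 1) ^ 2 := by
  classical
  refine ⟨5, ?_⟩
  intro V hF hD T hT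
  letI := hF; letI := hD
  obtain ⟨hne, hup⟩ := SimpleGraph.isTree_iff_existsUnique_path.mp hT
  have hc : T.Connected := hT.isConnected
  haveI : Nonempty V := hne
  set r : V := Classical.arbitrary V with hr
  have hed : T.ediam ≠ ⊤ := by
    obtain ⟨u, v, huv⟩ := SimpleGraph.exists_edist_eq_ediam_of_finite (α := V) (G := T)
    rw [← huv]
    exact SimpleGraph.edist_ne_top_iff_reachable.mpr (hc u v)
  set n := Fintype.card V with hn
  set L := Nat.log 2 n with hL
  set Dm := T.diam with hDm
  set idx : V → ℕ := fun v => ((Fintype.equivFin V) v).val with hidx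
  have idx_inj : Function.Injective idx := by
    intro a b h
    exact (Fintype.equivFin V).injective (Fin.val_injective h)
  have idx_lt : ∀ v, idx v < n := fun v => ((Fintype.equivFin V) v).isLt
  have diffbit : ∀ x y : V, x ≠ y → ∃ p, p < L + 1 ∧
      Nat.testBit (idx x) p ≠ Nat.testBit (idx y) p := by
    intro x y hxy
    by_contra hcon
    push_neg at hcon
    apply hxy
    apply idx_inj
    apply Nat.eq_of_testBit_eq
    intro i
    by_cases hi : i < L + 1
    · exact hcon i hi
    · have hpow : n < 2 ^ i := by
        calc n < 2 ^ (L + 1) := Nat.lt_pow_succ_log_self (by norm_num) n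
        _ ≤ 2 ^ i := Nat.pow_le_pow_right (by norm_num) (by omega)
      rw [Nat.testBit_eq_false_of_lt (lt_trans (idx_lt x) hpow),
        Nat.testBit_eq_false_of_lt (lt_trans (idx_lt y) hpow)]
  set dC : V → V → Finset V := fun a b => univ.filter (fun v => T.dist v b < T.dist v a)
    with hdC
  set uC : ℕ → ℕ → Bool → Finset V := fun j p bb =>
    univ.filter (fun v => ¬ ∃ x, T.dist r x = j ∧ T.dist r v = T.dist r x + T.dist x v ∧
      Nat.testBit (idx x) p = bb) with huC
  set E : Finset (V × V) :=
    (univ ×ˢ univ).filter (fun e => T.Adj e.1 e.2 ∧ T.dist r e.2 = T.dist r e.1 + 1) with hE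
  set S : Finset (Finset V) :=
    E.image (fun e => dC e.1 e.2) ∪
      ((range (Dm + 1) ×ˢ range (L + 1) ×ˢ (univ : Finset Bool)).image
        (fun z => uC z.1 z.2.1 z.2.2)) with hS
  have mem_dC : ∀ a b v : V, v ∈ dC a b ↔ T.dist v b < T.dist v a := by
    intro a b v; rw [hdC]; simp
  have mem_uC : ∀ (j p : ℕ) (bb : Bool) (v : V), v ∈ uC j p bb ↔
      ¬ ∃ x, T.dist r x = j ∧ T.dist r v = T.dist r x + T.dist x v ∧
        Nat.testBit (idx x) p = bb := by
    intro j p bb v; rw [huC]; simp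
  -- ancestors of intermediate vertices
  have ancBtw : ∀ s t u x : V, T.Adj s u → T.dist u t + 1 = T.dist s t →
      T.dist r u = T.dist r x + T.dist x u →
      T.dist r s = T.dist r x + T.dist x s ∨ T.dist r t = T.dist r x + T.dist x t := by
    intro s t u x hadj hdst hB
    have hsu1 : T.dist s u = 1 := TreeAux.adj_dist_one hc hadj
    have hus1 : T.dist u s = 1 := TreeAux.adj_dist_one hc hadj.symm
    have hss : T.dist s s = 0 := SimpleGraph.dist_self
    have huu : T.dist u u = 0 := SimpleGraph.dist_self
    have hxside := TreeAux.no_tie hc hup hadj x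
    have hrside := TreeAux.no_tie hc hup hadj r
    have htu : T.dist t u < T.dist t s := by
      have c1 : T.dist t u = T.dist u t := SimpleGraph.dist_comm
      have c2 : T.dist t s = T.dist s t := SimpleGraph.dist_comm
      omega
    rcases Nat.lt_or_ge (T.dist x s) (T.dist x u) with hxs | hxu'
    · rcases Nat.lt_or_ge (T.dist r s) (T.dist r u) with hrs | hru'
      · left
        have hcx := TreeAux.cross hc hup hadj (T.dist x u) x u rfl hxs (by omega)
        have hcr := TreeAux.cross hc hup hadj (T.dist r u) r u rfl hrs (by omega)
        omega
      · exfalso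
        have hru : T.dist r u < T.dist r s := by omega
        have hcr := TreeAux.cross hc hup hadj (T.dist x r) x r rfl hxs hru
        have c1 : T.dist x r = T.dist r x := SimpleGraph.dist_comm
        have c2 : T.dist u r = T.dist r u := SimpleGraph.dist_comm
        omega
    · have hxu : T.dist x u < T.dist x s := by omega
      rcases Nat.lt_or_ge (T.dist r s) (T.dist r u) with hrs | hru'
      · right
        have hcr1 := TreeAux.cross hc hup hadj (T.dist r x) r x rfl hrs hxu
        have hcr2 := TreeAux.cross hc hup hadj (T.dist r u) r u rfl hrs (by omega)
        have c3 : T.dist x u = T.dist u x := SimpleGraph.dist_comm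
        have hxu0 : T.dist x u = 0 := by omega
        have hxeq : x = u := (hc.dist_eq_zero_iff).mp hxu0
        have hcr3 := TreeAux.cross hc hup hadj (T.dist r t) r t rfl hrs htu
        have e1 : T.dist r x = T.dist r u := by rw [hxeq]
        have e2 : T.dist x t = T.dist u t := by rw [hxeq]
        omega
      · left
        have hru : T.dist r u < T.dist r s := by omega
        have hcr1 := TreeAux.cross hc hup hadj (T.dist s r) s r rfl (by omega) hru
        have hcr2 := TreeAux.cross hc hup hadj (T.dist s x) s x rfl (by omega) hxu
        have c1 : T.dist s r = T.dist r s := SimpleGraph.dist_comm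
        have c2 : T.dist u r = T.dist r u := SimpleGraph.dist_comm
        have c3 : T.dist s x = T.dist x s := SimpleGraph.dist_comm
        have c4 : T.dist u x = T.dist x u := SimpleGraph.dist_comm
        omega
  -- convexity
  have conv : ∀ C ∈ S, ∀ s t u : V, T.Adj s u → T.dist u t + 1 = T.dist s t →
      s ∈ C → t ∈ C → u ∈ C := by
    intro C hC s t u hadj hdst hsC htC
    rw [hS, Finset.mem_union] at hC
    rcases hC with hC | hC
    · obtain ⟨e, heE, rfl⟩ := Finset.mem_image.mp hC
      obtain ⟨a, b⟩ := e
      rw [hE, Finset.mem_filter] at heE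
      obtain ⟨-, hab, hor⟩ := heE
      dsimp only at hsC htC hab hor ⊢
      rw [mem_dC] at hsC htC ⊢
      by_contra hu
      have hne2 := TreeAux.no_tie hc hup hab u
      have hu' : T.dist u a < T.dist u b := by omega
      have hcr := TreeAux.cross hc hup hab (T.dist u s) u s rfl hu' hsC
      have h1 : T.dist u s = 1 := TreeAux.adj_dist_one hc hadj.symm
      have hbs : b = s := by
        have : T.dist b s = 0 := by omega
        exact (hc.dist_eq_zero_iff).mp this
      have hua : u = a := by
        have : T.dist u a = 0 := by omega
        exact (hc.dist_eq_zero_iff).mp this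
      have c1 : T.dist t b = T.dist t s := by rw [hbs]
      have c2 : T.dist t a = T.dist t u := by rw [hua]
      have c3 : T.dist u t = T.dist t u := SimpleGraph.dist_comm
      have c4 : T.dist s t = T.dist t s := SimpleGraph.dist_comm
      omega
    · obtain ⟨z, hzI, rfl⟩ := Finset.mem_image.mp hC
      rw [mem_uC] at hsC htC ⊢
      rintro ⟨x, hxj, hxB, hxbit⟩
      rcases ancBtw s t u x hadj hdst hxB with h | h
      · exact hsC ⟨x, hxj, h, hxbit⟩
      · exact htC ⟨x, hxj, h, hxbit⟩
  -- coverage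
  have cover : ∀ s t : V, s ≠ t → ∃ u, T.Adj s u ∧ T.dist u t + 1 = T.dist s t ∧
      ∃ C ∈ S, u ∈ C ∧ t ∈ C ∧ s ∉ C := by
    intro s t hst
    obtain ⟨u, hadj, hd⟩ := TreeAux.nexthop hc hup hst
    refine ⟨u, hadj, hd, ?_⟩
    have hss : T.dist s s = 0 := SimpleGraph.dist_self
    have huu : T.dist u u = 0 := SimpleGraph.dist_self
    have hsu1 : T.dist s u = 1 := TreeAux.adj_dist_one hc hadj
    have hus1 : T.dist u s = 1 := TreeAux.adj_dist_one hc hadj.symm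
    rcases TreeAux.adj_cases hc hup hadj r with hupc | hdown
    · -- up-step : dist r u + 1 = dist r s
      have hjle : T.dist r s ≤ Dm := SimpleGraph.dist_le_diam hed
      have hnb : ¬ T.dist r t = T.dist r s + T.dist s t := by
        intro h
        have htr : T.dist r t ≤ T.dist r u + T.dist u t := hc.dist_triangle
        have hst0 : 0 < T.dist s t := hc.pos_dist_of_ne hst
        omega
      have huIn : ∀ (p : ℕ) (bb : Bool), u ∈ uC (T.dist r s) p bb := by
        intro p bb
        rw [mem_uC]
        rintro ⟨x, hxj, hxB, -⟩
        omega
      have hsOut : ∀ p : ℕ, s ∉ uC (T.dist r s) p (Nat.testBit (idx s) p) := by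
        intro p
        rw [mem_uC]
        intro hcon
        exact hcon ⟨s, rfl, by omega, rfl⟩
      have hmemS : ∀ p : ℕ, p < L + 1 → ∀ bb : Bool, uC (T.dist r s) p bb ∈ S := by
        intro p hp bb
        rw [hS]
        apply Finset.mem_union_right
        refine Finset.mem_image.mpr ⟨⟨T.dist r s, p, bb⟩, ?_, rfl⟩
        simp only [Finset.mem_product, Finset.mem_range, Finset.mem_univ, and_true]
        exact ⟨by omega, by omega⟩
      by_cases hex : ∃ x : V, T.dist r x = T.dist r s ∧ T.dist r t = T.dist r x + T.dist x t
      · obtain ⟨x₀, hx0j, hx0B⟩ := hex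
        have hx0s : x₀ ≠ s := by
          rintro rfl
          exact hnb (by omega)
        obtain ⟨p, hpL, hbit⟩ := diffbit x₀ s hx0s
        refine ⟨uC (T.dist r s) p (Nat.testBit (idx s) p), hmemS p hpL _, huIn p _, ?_,
          hsOut p⟩
        rw [mem_uC]
        rintro ⟨x, hxj, hxB, hxbit⟩
        have hxx0 : x = x₀ :=
          TreeAux.anc_unique hc hup (T.dist r t) r t x x₀ rfl hxB hx0B (by omega)
        rw [hxx0] at hxbit
        exact hbit hxbit
      · refine ⟨uC (T.dist r s) 0 (Nat.testBit (idx s) 0), hmemS 0 (by omega) _, huIn 0 _,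
          ?_, hsOut 0⟩
        rw [mem_uC]
        rintro ⟨x, hxj, hxB, -⟩
        exact hex ⟨x, hxj, hxB⟩
    · -- down-step : dist r s + 1 = dist r u
      refine ⟨dC s u, ?_, ?_, ?_, ?_⟩
      · rw [hS]
        apply Finset.mem_union_left
        refine Finset.mem_image.mpr ⟨(s, u), ?_, rfl⟩
        rw [hE, Finset.mem_filter]
        exact ⟨Finset.mem_product.mpr ⟨Finset.mem_univ _, Finset.mem_univ _⟩, hadj,
          hdown.symm⟩
      · rw [mem_dC]; omega
      · rw [mem_dC]
        have c1 : T.dist t u = T.dist u t := SimpleGraph.dist_comm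
        have c2 : T.dist t s = T.dist s t := SimpleGraph.dist_comm
        omega
      · rw [mem_dC]; omega
  -- strict decrease step
  have step : ∀ s t : V, s ≠ t → ∃ u, T.Adj s u ∧ dd S u t < dd S s t := by
    intro s t hst
    obtain ⟨u, hadj, hd, C₀, hC₀S, hC₀u, hC₀t, hC₀s⟩ := cover s t hst
    refine ⟨u, hadj, ?_⟩
    have hsub : cat S t \ cat S u ⊆ cat S t \ cat S s := by
      intro C hC
      rw [Finset.mem_sdiff] at hC ⊢
      obtain ⟨hCt, hCu⟩ := hC
      refine ⟨hCt, fun hCs => hCu ?_⟩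
      rw [cat, Finset.mem_filter] at hCt hCs ⊢
      exact ⟨hCt.1, conv C hCt.1 s t u hadj hd hCs.2 hCt.2⟩
    have hmemC : C₀ ∈ cat S t \ cat S s := by
      rw [Finset.mem_sdiff, cat, Finset.mem_filter, cat, Finset.mem_filter]
      exact ⟨⟨hC₀S, hC₀t⟩, fun h => hC₀s h.2⟩
    have hnot : C₀ ∉ cat S t \ cat S u := by
      rw [Finset.mem_sdiff, cat, Finset.mem_filter]
      rintro ⟨-, h2⟩
      exact h2 (by rw [cat, Finset.mem_filter]; exact ⟨hC₀S, hC₀u⟩)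
    exact Finset.card_lt_card ((Finset.ssubset_iff_of_subset hsub).mpr ⟨C₀, hmemC, hnot⟩)
  refine ⟨S, ?_, ?_⟩
  · -- RoutingWorks
    intro s t hst
    generalize hN : dd S s t = N
    revert s
    induction N using Nat.strong_induction_on with
    | _ N IH =>
      intro s hst hN
      obtain ⟨u, hadj, hlt⟩ := step s t hst
      by_cases hut : u = t
      · subst hut
        exact Relation.ReflTransGen.single ⟨hadj, hlt⟩
      · exact Relation.ReflTransGen.head ⟨hadj, hlt⟩ (IH (dd S u t) (by omega) u hut rfl)
  · -- memdim bound
    have hcard : ∀ v : V, (cat S v).card ≤ Dm + (Dm + 1) * ((L + 1) * 2) := by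
      intro v
      have hsplit : cat S v ⊆
          (E.filter (fun e => v ∈ dC e.1 e.2)).image (fun e => dC e.1 e.2) ∪
            ((range (Dm + 1) ×ˢ range (L + 1) ×ˢ (univ : Finset Bool)).image
              (fun z => uC z.1 z.2.1 z.2.2)) := by
        intro C hC
        rw [cat, Finset.mem_filter] at hC
        obtain ⟨hCS, hvC⟩ := hC
        rw [hS, Finset.mem_union] at hCS
        rcases hCS with h | h
        · apply Finset.mem_union_left
          obtain ⟨e, heE, rfl⟩ := Finset.mem_image.mp h
          exact Finset.mem_image_of_mem _ (Finset.mem_filter.mpr ⟨heE, hvC⟩)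
        · exact Finset.mem_union_right _ h
      have hA : ((E.filter (fun e => v ∈ dC e.1 e.2)).image (fun e => dC e.1 e.2)).card
          ≤ Dm := by
        refine le_trans Finset.card_image_le ?_
        have hbtw : ∀ e : V × V, e ∈ E.filter (fun e => v ∈ dC e.1 e.2) →
            T.Adj e.1 e.2 ∧ T.dist r e.2 = T.dist r e.1 + 1 ∧
              T.dist r v = T.dist r e.2 + T.dist e.2 v := by
          rintro ⟨a, b⟩ he
          rw [Finset.mem_filter, hE, Finset.mem_filter] at he
          obtain ⟨⟨-, hab, hor⟩, hv⟩ := he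
          dsimp only at hab hor hv ⊢
          rw [mem_dC] at hv
          have hra : T.dist r a < T.dist r b := by omega
          have hcr := TreeAux.cross hc hup hab (T.dist r v) r v rfl hra hv
          exact ⟨hab, hor, by omega⟩
        have hmaps : ∀ e ∈ E.filter (fun e => v ∈ dC e.1 e.2),
            T.dist r e.2 ∈ Finset.Icc 1 Dm := by
          intro e he
          obtain ⟨hab, hor, hbtwv⟩ := hbtw e he
          rw [Finset.mem_Icc]
          exact ⟨by omega, SimpleGraph.dist_le_diam hed⟩
        have hinj : Set.InjOn (fun e : V × V => T.dist r e.2)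
            ↑(E.filter (fun e => v ∈ dC e.1 e.2)) := by
          rintro ⟨a, b⟩ he ⟨a', b'⟩ he' heq
          obtain ⟨hab, hor, hbv⟩ := hbtw _ (Finset.mem_coe.mp he)
          obtain ⟨hab', hor', hbv'⟩ := hbtw _ (Finset.mem_coe.mp he')
          dsimp only at hab hor hbv hab' hor' hbv' heq ⊢
          have hbb : b = b' :=
            TreeAux.anc_unique hc hup (T.dist r v) r v b b' rfl hbv hbv' heq
          subst hbb
          have haa : a = a' := by
            have hne2 := TreeAux.no_tie hc hup hab a'
            rcases Nat.lt_or_ge (T.dist a' a) (T.dist a' b) with h | h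
            · have hone : T.dist a' b = 1 := TreeAux.adj_dist_one hc hab'
              have h0 : T.dist a' a = 0 := by omega
              exact ((hc.dist_eq_zero_iff).mp h0).symm
            · exfalso
              have h3 : T.dist a' b < T.dist a' a := by omega
              have hra : T.dist r a < T.dist r b := by omega
              have hcr := TreeAux.cross hc hup hab (T.dist r a') r a' rfl hra h3
              omega
          rw [haa]
        calc (E.filter (fun e => v ∈ dC e.1 e.2)).card
            ≤ (Finset.Icc 1 Dm).card := Finset.card_le_card_of_injOn _ hmaps hinj
          _ = Dm := by rw [Nat.card_Icc]; omega
      have hB : (((range (Dm + 1) ×ˢ range (L + 1) ×ˢ (univ : Finset Bool)).image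
          (fun z => uC z.1 z.2.1 z.2.2))).card ≤ (Dm + 1) * ((L + 1) * 2) := by
        refine le_trans Finset.card_image_le ?_
        rw [Finset.card_product, Finset.card_product, Finset.card_range, Finset.card_range,
          Finset.card_univ, Fintype.card_bool]

      calc (cat S v).card ≤ _ := Finset.card_le_card hsplit
        _ ≤ _ := Finset.card_union_le _ _
        _ ≤ Dm + (Dm + 1) * ((L + 1) * 2) := Nat.add_le_add hA hB
    have harith : Dm + (Dm + 1) * ((L + 1) * 2) ≤ 5 * (Dm + L + 1) ^ 2 := by
      have e0 : (Dm + 1) * ((L + 1) * 2) = 2 * ((Dm + 1) * (L + 1)) := by ring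
      have e1 : (Dm + 1) * (L + 1) ≤ (Dm + L + 1) * (Dm + L + 1) :=
        Nat.mul_le_mul (by omega) (by omega)
      have e2 : Dm ≤ (Dm + L + 1) * (Dm + L + 1) :=
        le_trans (by omega) (Nat.le_mul_of_pos_left _ (by omega))
      have e3 : (Dm + L + 1) ^ 2 = (Dm + L + 1) * (Dm + L + 1) := by ring
      omega
    exact Finset.sup_le fun v _ => le_trans (hcard v) harith
end

section
/- For every finite connected graph G on n vertices, there exists a category system S such that greedy category-based routing correctly routes between all pairs of vertices and memdim(S) = O((diam(G) + log n)^2). -/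
open Finset SimpleGraph
set_option linter.unusedSectionVars false

variable {V : Type*}

namespace CGRM

variable {V : Type} [Fintype V] [DecidableEq V] {G : SimpleGraph V}

/-- A rooted shortest-path-tree structure on a connected graph. -/
structure Setup (G : SimpleGraph V) : Type where
  conn : G.Connected
  r : V
  par : V → V
  adj_par : ∀ u, u ≠ r → G.Adj u (par u)
  dist_par : ∀ u, u ≠ r → G.dist r (par u) + 1 = G.dist r u

namespace Setup

variable (st : Setup G)

/-- Depth of a vertex = distance from the root. -/
noncomputable def dep (u : V) : ℕ := G.dist st.r u

/-- Ancestor of `u` at depth `d` (for `d ≤ dep u`). -/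
noncomputable def anc (d : ℕ) (u : V) : V := st.par^[st.dep u - d] u

@[simp] lemma dep_r : st.dep st.r = 0 := by simp [dep]

lemma eq_r_of_dep {u : V} (h : st.dep u = 0) : u = st.r :=
  ((st.conn.dist_eq_zero_iff).mp h).symm

lemma dep_par {u : V} (h : u ≠ st.r) : st.dep (st.par u) + 1 = st.dep u :=
  st.dist_par u h

lemma dep_iter : ∀ (k : ℕ) (u : V), k ≤ st.dep u →
    st.dep (st.par^[k] u) + k = st.dep u := by
  intro k
  induction k with
  | zero => intro u _; simp
  | succ k ih =>
    intro u hk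
    have hur : u ≠ st.r := by
      intro h; rw [h] at hk; simp at hk
    have hdp := st.dep_par hur
    rw [Function.iterate_succ_apply]
    have := ih (st.par u) (by omega)
    omega

lemma dep_anc {d : ℕ} {u : V} (h : d ≤ st.dep u) : st.dep (st.anc d u) = d := by
  have := st.dep_iter (st.dep u - d) u (by omega)
  unfold anc
  omega

@[simp] lemma anc_self (u : V) : st.anc (st.dep u) u = u := by
  simp [anc]

lemma anc_par {u : V} (h : u ≠ st.r) {d : ℕ} (hd : d + 1 ≤ st.dep u) :
    st.anc d (st.par u) = st.anc d u := by
  have hdp := st.dep_par h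
  unfold anc
  rw [show st.dep u - d = (st.dep (st.par u) - d) + 1 by omega,
    Function.iterate_succ_apply]

lemma anc_zero (u : V) : st.anc 0 u = st.r :=
  st.eq_r_of_dep (st.dep_anc (Nat.zero_le _))

/-- An injective encoding of the vertices as natural numbers `< card V`. -/
noncomputable def enc : V → ℕ := fun v => ((Fintype.equivFin V) v : ℕ)

lemma enc_inj {a b : V} (h : enc (V := V) a = enc b) : a = b := by
  have : ((Fintype.equivFin V) a) = ((Fintype.equivFin V) b) := Fin.ext h
  exact (Fintype.equivFin V).injective this

lemma enc_lt (v : V) : enc v < Fintype.card V := ((Fintype.equivFin V) v).isLt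

/-- Subtree category. -/
noncomputable def subF (v : V) : Finset V :=
  univ.filter fun u => st.dep v ≤ st.dep u ∧ st.anc (st.dep v) u = v

/-- Bit-class complement category. -/
noncomputable def NF (d i : ℕ) (b : Bool) : Finset V :=
  univ.filter fun u => st.dep u < d ∨ Nat.testBit (enc (st.anc d u)) i ≠ b

/-- Maximal depth. -/
noncomputable def DD : ℕ := univ.sup st.dep

/-- Bit length. -/
def LL (V : Type) [Fintype V] : ℕ := Nat.log 2 (Fintype.card V) + 1

noncomputable def Sys : Finset (Finset V) :=
  (univ.image st.subF) ∪
    ((range (st.DD + 1) ×ˢ range (LL V) ×ˢ ({false, true} : Finset Bool)).image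
      fun p => st.NF p.1 p.2.1 p.2.2)

lemma mem_subF {u v : V} :
    u ∈ st.subF v ↔ st.dep v ≤ st.dep u ∧ st.anc (st.dep v) u = v := by
  simp [subF]

lemma mem_NF {u : V} {d i : ℕ} {b : Bool} :
    u ∈ st.NF d i b ↔ st.dep u < d ∨ Nat.testBit (enc (st.anc d u)) i ≠ b := by
  simp [NF]

lemma subF_mem_Sys (v : V) : st.subF v ∈ st.Sys :=
  mem_union_left _ (mem_image_of_mem _ (mem_univ v))

lemma NF_mem_Sys {d i : ℕ} (hd : d ≤ st.DD) (hi : i < LL V) (b : Bool) :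
    st.NF d i b ∈ st.Sys := by
  refine mem_union_right _ (mem_image.mpr ⟨⟨d, i, b⟩, ?_, rfl⟩)
  cases b <;> simp [Finset.mem_product, Nat.lt_succ_of_le hd, hi]

lemma Sys_cases {C : Finset V} (hC : C ∈ st.Sys) :
    (∃ v, C = st.subF v) ∨ (∃ d i b, C = st.NF d i b) := by
  rcases mem_union.mp hC with h | h
  · obtain ⟨v, _, rfl⟩ := mem_image.mp h
    exact Or.inl ⟨v, rfl⟩
  · obtain ⟨⟨d, i, b⟩, _, rfl⟩ := mem_image.mp h
    exact Or.inr ⟨d, i, b, rfl⟩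


lemma exists_testBit_ne {L a b : ℕ} (hab : a ≠ b) (ha : a < 2 ^ L) (hb : b < 2 ^ L) :
    ∃ i < L, a.testBit i ≠ b.testBit i := by
  by_contra h
  push_neg at h
  apply hab
  apply Nat.eq_of_testBit_eq
  intro i
  by_cases hi : i < L
  · exact h i hi
  · rw [Nat.testBit_eq_false_of_lt (lt_of_lt_of_le ha (Nat.pow_le_pow_right (by norm_num) (by omega))),
      Nat.testBit_eq_false_of_lt (lt_of_lt_of_le hb (Nat.pow_le_pow_right (by norm_num) (by omega)))]

/-- The key step lemma: from any `x ≠ t` there is a neighbour `y` such that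
every category containing `t` and `x` also contains `y`, and some category
contains `t` and `y` but not `x`. -/
lemma step {x t : V} (hxt : x ≠ t) :
    ∃ y, G.Adj x y ∧ (∀ C ∈ st.Sys, t ∈ C → x ∈ C → y ∈ C) ∧
      ∃ C ∈ st.Sys, t ∈ C ∧ y ∈ C ∧ x ∉ C := by
  by_cases hsub : st.dep x ≤ st.dep t ∧ st.anc (st.dep x) t = x
  · -- `t` is strictly below `x`: move down to the child of `x` towards `t`.
    have hlt : st.dep x < st.dep t := by
      rcases lt_or_eq_of_le hsub.1 with h | h
      · exact h
      · exfalso; apply hxt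
        have := hsub.2
        rw [h, st.anc_self] at this
        exact this.symm
    set c := st.anc (st.dep x + 1) t with hc
    have hdc : st.dep c = st.dep x + 1 := st.dep_anc (by omega)
    have hcr : c ≠ st.r := by
      intro h; rw [h] at hdc; simp at hdc
    have hpar_c : st.par c = x := by
      have h1 : st.par (st.anc (st.dep x + 1) t) = st.anc (st.dep x) t := by
        unfold anc
        rw [show st.dep t - st.dep x = (st.dep t - (st.dep x + 1)) + 1 by omega,
          Function.iterate_succ_apply']
      rw [← hc] at h1
      rw [h1, hsub.2]
    have hadj : G.Adj x c := by
      have := st.adj_par c hcr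
      rw [hpar_c] at this
      exact this.symm
    refine ⟨c, hadj, ?_, ?_⟩
    · intro C hC ht hx
      rcases st.Sys_cases hC with ⟨v, rfl⟩ | ⟨d, i, b, rfl⟩
      · rw [st.mem_subF] at hx ⊢
        obtain ⟨hv1, hv2⟩ := hx
        refine ⟨by omega, ?_⟩
        have h2 := st.anc_par hcr (d := st.dep v) (by omega)
        rw [hpar_c] at h2
        rw [← h2]
        exact hv2
      · rw [st.mem_NF] at hx ht ⊢
        by_contra hcn
        push_neg at hcn
        obtain ⟨h1, h2⟩ := hcn
        by_cases hdx : d ≤ st.dep x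
        · have h3 := st.anc_par hcr (d := d) (by omega)
          rw [hpar_c] at h3
          rcases hx with h | h
          · omega
          · rw [h3] at h; exact h h2
        · have hd : d = st.dep c := by omega
          have hancc : st.anc d c = c := by rw [hd, st.anc_self]
          have hanct : st.anc d t = c := by rw [hd, hdc]
          rcases ht with h | h
          · omega
          · rw [hanct] at h
            rw [hancc] at h2
            exact h h2
    · refine ⟨st.subF c, st.subF_mem_Sys c, ?_, ?_, ?_⟩
      · rw [st.mem_subF]
        exact ⟨by omega, by rw [hdc]⟩
      · rw [st.mem_subF]
        exact ⟨le_refl _, st.anc_self c⟩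
      · rw [st.mem_subF]
        intro h
        omega
  · -- `t` is not below `x`: move up to the parent of `x`.
    have hxr : x ≠ st.r := by
      rintro rfl
      apply hsub
      constructor
      · simp
      · rw [st.dep_r]
        exact st.anc_zero t
    set p := st.par x with hp
    have hadj := st.adj_par x hxr
    have hdp : st.dep p + 1 = st.dep x := st.dep_par hxr
    refine ⟨p, hadj, ?_, ?_⟩
    · intro C hC ht hx
      rcases st.Sys_cases hC with ⟨v, rfl⟩ | ⟨d, i, b, rfl⟩
      · rw [st.mem_subF] at hx ht ⊢
        obtain ⟨h1, h2⟩ := hx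
        by_cases hv : st.dep v ≤ st.dep p
        · refine ⟨hv, ?_⟩
          have h3 := st.anc_par hxr (d := st.dep v) (by omega)
          rw [← hp] at h3
          rw [h3]
          exact h2
        · exfalso
          have hdv : st.dep v = st.dep x := by omega
          have hvx : v = x := by rw [← h2, hdv, st.anc_self]
          rw [hvx] at ht
          exact hsub ht
      · rw [st.mem_NF] at hx ⊢
        by_contra hpn
        push_neg at hpn
        obtain ⟨h1, h2⟩ := hpn
        have h3 := st.anc_par hxr (d := d) (by omega)
        rw [← hp] at h3
        rcases hx with h | h
        · omega
        · rw [← h3] at h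
          exact h h2
    · set d := st.dep x with hd
      have hd1 : 1 ≤ d := by
        by_contra h
        exact hxr (st.eq_r_of_dep (by omega))
      have hdD : d ≤ st.DD := by
        rw [hd]; exact Finset.le_sup (f := st.dep) (mem_univ x)
      by_cases hdt : st.dep t < d
      · refine ⟨st.NF d 0 (Nat.testBit (enc x) 0), st.NF_mem_Sys hdD (by simp [LL]) _,
          ?_, ?_, ?_⟩
        · rw [st.mem_NF]; exact Or.inl hdt
        · rw [st.mem_NF]; exact Or.inl (by omega)
        · rw [st.mem_NF]
          push_neg
          refine ⟨by omega, ?_⟩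
          rw [hd, st.anc_self]
      · have hy : st.anc d t ≠ x := by
          intro h
          exact hsub ⟨by omega, h⟩
        have hbit : ∃ i < LL V, Nat.testBit (enc (st.anc d t)) i ≠ Nat.testBit (enc (V := V) x) i := by
          apply exists_testBit_ne
          · intro h; exact hy (enc_inj h)
          · exact lt_of_lt_of_le (enc_lt _) (le_of_lt (Nat.lt_pow_succ_log_self (by norm_num) _))
          · exact lt_of_lt_of_le (enc_lt _) (le_of_lt (Nat.lt_pow_succ_log_self (by norm_num) _))
        obtain ⟨i, hiL, hib⟩ := hbit
        refine ⟨st.NF d i (Nat.testBit (enc x) i), st.NF_mem_Sys hdD hiL _, ?_, ?_, ?_⟩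
        · rw [st.mem_NF]; exact Or.inr hib
        · rw [st.mem_NF]; exact Or.inl (by omega)
        · rw [st.mem_NF]
          push_neg
          refine ⟨by omega, ?_⟩
          rw [hd, st.anc_self]

lemma dd_lt {x y t : V}
    (hno : ∀ C ∈ st.Sys, t ∈ C → x ∈ C → y ∈ C)
    (hg : ∃ C ∈ st.Sys, t ∈ C ∧ y ∈ C ∧ x ∉ C) :
    dd st.Sys y t < dd st.Sys x t := by
  apply Finset.card_lt_card
  obtain ⟨C, hCS, hCt, hCy, hCx⟩ := hg
  constructor
  · intro D hD
    rw [Finset.mem_sdiff] at hD ⊢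
    obtain ⟨hDt, hDy⟩ := hD
    rw [cat, Finset.mem_filter] at hDt
    refine ⟨by rw [cat, Finset.mem_filter]; exact hDt, ?_⟩
    intro hDx
    rw [cat, Finset.mem_filter] at hDx hDy
    exact hDy ⟨hDt.1, hno D hDt.1 hDt.2 hDx.2⟩
  · intro hcon
    have hC1 : C ∈ cat st.Sys t \ cat st.Sys x := by
      rw [Finset.mem_sdiff, cat, cat, Finset.mem_filter, Finset.mem_filter]
      exact ⟨⟨hCS, hCt⟩, fun h => hCx h.2⟩
    have hC2 := hcon hC1
    rw [Finset.mem_sdiff, cat, cat, Finset.mem_filter, Finset.mem_filter] at hC2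
    exact hC2.2 ⟨hCS, hCy⟩

lemma routes : ∀ (n : ℕ) (s t : V), dd st.Sys s t ≤ n → s ≠ t →
    RoutesTo G st.Sys s t := by
  intro n
  induction n with
  | zero =>
    intro s t hdd hst
    obtain ⟨y, hadj, hno, hg⟩ := st.step hst
    have := st.dd_lt hno hg
    omega
  | succ n ih =>
    intro s t hdd hst
    obtain ⟨y, hadj, hno, hg⟩ := st.step hst
    have hlt := st.dd_lt hno hg
    by_cases hyt : y = t
    · subst hyt
      exact Relation.ReflTransGen.single ⟨hadj, hlt⟩
    · exact Relation.ReflTransGen.head ⟨hadj, hlt⟩ (ih y t (by omega) hyt)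

lemma cat_card (u : V) :
    (cat st.Sys u).card ≤ (st.DD + 1) + (st.DD + 1) * LL V * 2 := by
  have hsub : cat st.Sys u ⊆
      ((range (st.dep u + 1)).image fun d => st.subF (st.anc d u)) ∪
        ((range (st.DD + 1) ×ˢ range (LL V) ×ˢ ({false, true} : Finset Bool)).image
          fun p => st.NF p.1 p.2.1 p.2.2) := by
    intro C hC
    rw [cat, Finset.mem_filter] at hC
    obtain ⟨hCS, hCu⟩ := hC
    rcases Finset.mem_union.mp hCS with h | h
    · obtain ⟨v, _, rfl⟩ := Finset.mem_image.mp h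
      rw [st.mem_subF] at hCu
      apply Finset.mem_union_left
      exact Finset.mem_image.mpr ⟨st.dep v, Finset.mem_range.mpr (by omega), by rw [hCu.2]⟩
    · exact Finset.mem_union_right _ h
  have hA : ((range (st.dep u + 1)).image fun d => st.subF (st.anc d u)).card ≤ st.DD + 1 := by
    refine le_trans Finset.card_image_le ?_
    rw [Finset.card_range]
    have : st.dep u ≤ st.DD := Finset.le_sup (f := st.dep) (mem_univ u)
    omega
  have hB : ((range (st.DD + 1) ×ˢ range (LL V) ×ˢ ({false, true} : Finset Bool)).image
      (fun p => st.NF p.1 p.2.1 p.2.2)).card ≤ (st.DD + 1) * LL V * 2 := by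
    refine le_trans Finset.card_image_le ?_
    rw [Finset.card_product, Finset.card_product, Finset.card_range, Finset.card_range]
    have h2 : ({false, true} : Finset Bool).card = 2 := rfl
    rw [h2]
    exact le_of_eq (by ring)
  calc (cat st.Sys u).card ≤ _ := Finset.card_le_card hsub
    _ ≤ _ := Finset.card_union_le _ _
    _ ≤ (st.DD + 1) + (st.DD + 1) * LL V * 2 := add_le_add hA hB

end Setup

end CGRM

/-- For every finite connected graph `G` on `n` vertices there is a
category system for which greedy routing works between all pairs and whose
membership dimension is `O((diam(G) + log n)^2)`. -/
theorem connected_graph_routing_memdim :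
    ∃ c : ℕ, ∀ (V : Type) (_ : Fintype V) (_ : DecidableEq V) (G : SimpleGraph V),
      G.Connected →
      ∃ S : Finset (Finset V),
        RoutingWorks G S ∧
          memdim S ≤ c * (G.diam + Nat.log 2 (Fintype.card V) + 1) ^ 2 := by
  classical
  use 3
  intro V _ _ G hconn
  haveI : Nonempty V := hconn.nonempty
  set r : V := Classical.arbitrary V with hr
  have hpar : ∀ u : V, u ≠ r → ∃ p, G.Adj u p ∧ G.dist r p + 1 = G.dist r u := by
    intro u hu
    obtain ⟨w, hw⟩ := (hconn u r).exists_walk_length_eq_dist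
    have hnn : ¬ w.Nil := SimpleGraph.Walk.not_nil_of_ne hu
    refine ⟨w.getVert 1, w.adj_snd hnn, ?_⟩
    have hlen : w.tail.length + 1 = w.length := SimpleGraph.Walk.length_tail_add_one hnn
    have h1 : G.dist (w.getVert 1) r ≤ w.tail.length := SimpleGraph.dist_le w.tail
    have hadj1 : G.dist (w.getVert 1) u ≤ 1 := by
      have := SimpleGraph.dist_le
        (SimpleGraph.Walk.cons (w.adj_snd hnn).symm SimpleGraph.Walk.nil)
      simpa using this
    have htri : G.dist r u ≤ G.dist r (w.getVert 1) + G.dist (w.getVert 1) u :=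
      hconn.dist_triangle
    have h4 : G.dist r u = G.dist u r := SimpleGraph.dist_comm
    have h5 : G.dist (w.getVert 1) r = G.dist r (w.getVert 1) := SimpleGraph.dist_comm
    omega
  set st : CGRM.Setup G :=
    { conn := hconn
      r := r
      par := fun u => if h : u = r then u else Classical.choose (hpar u h)
      adj_par := by
        intro u hu
        simp only [dif_neg hu]
        exact (Classical.choose_spec (hpar u hu)).1
      dist_par := by
        intro u hu
        simp only [dif_neg hu]
        exact (Classical.choose_spec (hpar u hu)).2 } with hst
  refine ⟨st.Sys, ?_, ?_⟩
  · intro s t hts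
    exact st.routes (dd st.Sys s t) s t le_rfl hts
  · rw [memdim]
    apply Finset.sup_le
    intro u _
    refine le_trans (st.cat_card u) ?_
    have hDD : st.DD ≤ G.diam := by
      apply Finset.sup_le
      intro v _
      apply SimpleGraph.dist_le_diam
      obtain ⟨a, b, hab⟩ := SimpleGraph.exists_edist_eq_ediam_of_finite (G := G)
      rw [← hab]
      exact SimpleGraph.edist_ne_top_iff_reachable.mpr (hconn a b)
    have hL : CGRM.Setup.LL V = Nat.log 2 (Fintype.card V) + 1 := rfl
    set A := G.diam
    set B := Nat.log 2 (Fintype.card V)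
    rw [hL]
    have hDD1 : st.DD + 1 ≤ A + 1 := by omega
    calc st.DD + 1 + (st.DD + 1) * (B + 1) * 2
        ≤ (A + 1) + (A + 1) * (B + 1) * 2 := by
          exact add_le_add hDD1 (Nat.mul_le_mul_right 2 (Nat.mul_le_mul_right (B + 1) hDD1))
      _ ≤ 3 * (A + B + 1) ^ 2 := by nlinarith [sq_nonneg (A + B + 1)]
end
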